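/- arXiv:2305.11677 — 7 statements merged into one kernel-verified Lean document; each statement's English description precedes it below -/
import Mathlib

section
/- Let q be an even prime power (a power of 2), let m ≡ 2 (mod 4) with m ≥ 6, and let n = q^m + 1. Then the largest coset leader modulo n is δ_{1,n} = q(q-1)(q^m+1)/(2(q^2+1)), and the q-cyclotomic coset of δ_{1,n} modulo n has exactly 4 elements. -/
/-- The `q`-cyclotomic coset of `s` modulo `n`:
`C_s = { s·q^j mod n : 0 ≤ j ≤ ord_n(q) - 1 }`. -/
noncomputable def cycCoset (q n s : ℕ) : Finset ℕ :=
  (Finset.range (orderOf (q : ZMod n))).image fun j => s * q ^ j % n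

/-- `s` is a coset leader modulo `n` iff `s = min C_s`. -/
def IsCosetLeader (q n s : ℕ) : Prop :=
  s ∈ cycCoset q n s ∧ ∀ x ∈ cycCoset q n s, s ≤ x

/-- The set of coset leaders modulo `n` (as a finset of `{0, …, n-1}`). -/
noncomputable def cosetLeaders (q n : ℕ) : Finset ℕ :=
  (Finset.range n).filter fun s => s ∈ cycCoset q n s ∧ ∀ x ∈ cycCoset q n s, s ≤ x

/-- The `i`-th largest coset leader modulo `n` (for `i ≥ 1`), i.e. `δ_{i,n}`. -/
noncomputable def nthLargestCosetLeader (q n i : ℕ) : ℕ :=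
  (((cosetLeaders q n).sort (· ≤ ·)).reverse).getD (i - 1) 0

lemma nth_largest_eq_max (F : Finset ℕ) (δ : ℕ) (hδ : δ ∈ F)
    (hmax : ∀ s ∈ F, s ≤ δ) : ((F.sort (· ≤ ·)).reverse).getD 0 0 = δ := by
  have hδL : δ ∈ F.sort (· ≤ ·) := (Finset.mem_sort _).mpr hδ
  obtain ⟨a, t, hat⟩ := List.exists_cons_of_ne_nil
    (show (F.sort (· ≤ ·)).reverse ≠ [] by
      simp only [ne_eq, List.reverse_eq_nil_iff]
      exact List.ne_nil_of_mem hδL)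
  have hL : F.sort (· ≤ ·) = t.reverse ++ [a] := by
    simpa using congrArg List.reverse hat
  have hsorted := Finset.pairwise_sort F (· ≤ ·)
  rw [hL] at hsorted hδL
  have haF : a ∈ F := by
    rw [← Finset.mem_sort (· ≤ ·), hL]; simp
  have h1 : a ≤ δ := hmax a haF
  have h2 : δ ≤ a := by
    rcases List.mem_append.mp hδL with h | h
    · exact (List.pairwise_append.mp hsorted).2.2 δ h a (by simp)
    · simp at h; omega
  rw [hat, List.getD_cons_zero]
  omega

set_option maxHeartbeats 2000000 in
lemma key (q n N2 m k : ℕ) (hq : q = 2*k+2) (hnm : n = q^m+1)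
    (hfac : n = (q^2+1)*N2) (hm : 6 ≤ m) (hm2 : m % 2 = 0) :
    ((2*k^2+3*k+1)*N2 ∈ cosetLeaders q n ∧
      ∀ s ∈ cosetLeaders q n, s ≤ (2*k^2+3*k+1)*N2) ∧
    (cycCoset q n ((2*k^2+3*k+1)*N2)).card = 4 := by
  have hN2 : 0 < N2 := by
    rcases Nat.eq_zero_or_pos N2 with h | h
    · exfalso
      have h0 : 0 < n := by rw [hnm]; positivity
      rw [hfac, h, mul_zero] at h0; omega
    · exact h
  have hqm1 : 1 ≤ q ^ m := Nat.one_le_pow _ _ (by omega)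
  have hn1 : 1 < n := by rw [hnm]; omega
  have hQ : q^2 + 1 = (4*k^2+8*k+5) := by rw [hq]; ring
  -- order facts
  have h0 : ((n : ℕ) : ZMod n) = 0 := ZMod.natCast_self n
  have h1 : ((q^m : ℕ) : ZMod n) = -1 := by
    have h2 : ((q^m + 1 : ℕ) : ZMod n) = 0 := by rw [← hnm]; exact_mod_cast h0
    push_cast at h2 ⊢
    linear_combination h2
  have hpow : ((q : ℕ) : ZMod n)^(2*m) = 1 := by
    have h3 : ((q : ℕ) : ZMod n)^(2*m) = (((q^m : ℕ) : ZMod n))^2 := by push_cast; ring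
    rw [h3, h1]; ring
  set d := orderOf ((q : ℕ) : ZMod n) with hd
  have hd0 : 0 < d :=
    orderOf_pos_iff.mpr (isOfFinOrder_iff_pow_eq_one.mpr ⟨2*m, by omega, hpow⟩)
  have hqd : q ^ d ≡ 1 [MOD n] := by
    have h4 := pow_orderOf_eq_one ((q : ℕ) : ZMod n)
    rw [← hd] at h4
    have h5 : ((q^d : ℕ) : ZMod n) = ((1:ℕ) : ZMod n) := by push_cast; simpa using h4
    exact (ZMod.natCast_eq_natCast_iff _ _ _).mp h5
  have hd4 : 4 ≤ d := by
    by_contra hcon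
    push_neg at hcon
    have hlt : q ^ d < n := by
      have e1 : q ^ d ≤ q ^ 3 := Nat.pow_le_pow_right (by omega) (by omega)
      have e2 : q ^ 3 < q ^ m := Nat.pow_lt_pow_right (by omega) (by omega)
      omega
    have h6 : q ^ d % n = 1 % n := hqd
    rw [Nat.mod_eq_of_lt hlt, Nat.mod_eq_of_lt hn1] at h6
    have h7 : 2 ≤ q ^ d := by
      calc 2 ≤ q := by omega
        _ = q ^ 1 := (pow_one q).symm
        _ ≤ q ^ d := Nat.pow_le_pow_right (by omega) hd0
    omega
  -- membership helper
  have memC : ∀ s j r : ℕ, s * q ^ j ≡ r [MOD n] → r < n → r ∈ cycCoset q n s := by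
    intro s j r hr hrn
    have hper : s * q ^ (j % d) ≡ s * q ^ j [MOD n] := by
      have e1 : (q^d)^(j/d) * q^(j%d) = q ^ j := by
        rw [← pow_mul, ← pow_add, Nat.div_add_mod]
      have e2 : q ^ j ≡ 1^(j/d) * q^(j%d) [MOD n] := by
        rw [← e1]; exact Nat.ModEq.mul_right _ (hqd.pow _)
      rw [one_pow, one_mul] at e2
      exact Nat.ModEq.mul_left s e2.symm
    rw [cycCoset, Finset.mem_image]
    refine ⟨j % d, Finset.mem_range.mpr (Nat.mod_lt _ hd0), ?_⟩
    have h8 : s * q ^ (j % d) % n = r % n := (hper.trans hr)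
    rw [h8, Nat.mod_eq_of_lt hrn]
  -- δ and its coset values
  set δ := (2*k^2+3*k+1)*N2 with hδ
  have hbound : ∀ c : ℕ, c < 4*k^2+8*k+5 → c * N2 < n := by
    intro c hc
    rw [hfac, hQ]
    exact (Nat.mul_lt_mul_right hN2).mpr hc
  have hI1 : δ * q = (2*k^2+3*k+2)*N2 + k * n := by
    rw [hδ, hfac, hq]; ring
  have hI2 : δ * q^2 = (2*k^2+5*k+4)*N2 + (2*k^2+3*k)*n := by
    rw [hδ, hfac, hq]; ring
  have hI3 : δ * q^3 = (2*k^2+5*k+3)*N2 + ((k+1)*(4*k^2+6*k+1))*n := by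
    rw [hδ, hfac, hq]; ring
  have hI4 : δ * q^4 = δ + ((2*k^2+3*k+1)*(4*k^2+8*k+3))*n := by
    rw [hδ, hfac, hq]; ring
  have hval : ∀ j, δ * q ^ j % n =
      (if j % 4 = 0 then (2*k^2+3*k+1)*N2 else if j % 4 = 1 then (2*k^2+3*k+2)*N2
       else if j % 4 = 2 then (2*k^2+5*k+4)*N2 else (2*k^2+5*k+3)*N2) := by
    intro j
    induction j using Nat.strong_induction_on with
    | _ j ih =>
      rcases lt_or_ge j 4 with hj | hj
      · interval_cases j
        · have hlt : δ < n := hδ ▸ hbound _ (by nlinarith)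
          simpa using Nat.mod_eq_of_lt hlt
        · have h12 : δ * q ^ 1 % n = (2*k^2+3*k+2)*N2 := by
            rw [pow_one, hI1, Nat.add_mul_mod_self_right]
            exact Nat.mod_eq_of_lt (hbound _ (by nlinarith))
          simpa using h12
        · have h12 : δ * q ^ 2 % n = (2*k^2+5*k+4)*N2 := by
            rw [hI2, Nat.add_mul_mod_self_right]
            exact Nat.mod_eq_of_lt (hbound _ (by nlinarith))
          simpa using h12
        · have h12 : δ * q ^ 3 % n = (2*k^2+5*k+3)*N2 := by
            rw [hI3, Nat.add_mul_mod_self_right]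
            exact Nat.mod_eq_of_lt (hbound _ (by nlinarith))
          simpa using h12
      · obtain ⟨j', rfl⟩ : ∃ j', j = j' + 4 := ⟨j - 4, by omega⟩
        have e1 : δ * q ^ (j'+4) = δ * q ^ j' + ((2*k^2+3*k+1)*(4*k^2+8*k+3)*q^j')*n := by
          have e0 : δ * q ^ (j'+4) = (δ * q^4) * q^j' := by ring
          rw [e0, hI4]; ring
        have h4 : δ * q ^ (j'+4) % n = δ * q ^ j' % n := by
          rw [e1, Nat.add_mul_mod_self_right]
        rw [Nat.add_mod_right, h4]
        exact ih j' (by omega)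
  have hsub : ∀ x ∈ cycCoset q n δ, x = (2*k^2+3*k+1)*N2 ∨ x = (2*k^2+3*k+2)*N2 ∨
      x = (2*k^2+5*k+4)*N2 ∨ x = (2*k^2+5*k+3)*N2 := by
    intro x hx
    rw [cycCoset, Finset.mem_image] at hx
    obtain ⟨j, -, rfl⟩ := hx
    rw [hval j]
    split_ifs <;> tauto
  have hmemi : ∀ i, i < 4 → δ * q ^ i % n ∈ cycCoset q n δ := by
    intro i hi
    rw [cycCoset, Finset.mem_image]
    exact ⟨i, Finset.mem_range.mpr (by omega), rfl⟩
  have hS0 : (2*k^2+3*k+1)*N2 ∈ cycCoset q n δ := by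
    have h13 := hmemi 0 (by omega); rw [hval 0] at h13; norm_num at h13; exact h13
  have hS1 : (2*k^2+3*k+2)*N2 ∈ cycCoset q n δ := by
    have h13 := hmemi 1 (by omega); rw [hval 1] at h13; norm_num at h13; exact h13
  have hS2 : (2*k^2+5*k+4)*N2 ∈ cycCoset q n δ := by
    have h13 := hmemi 2 (by omega); rw [hval 2] at h13; norm_num at h13; exact h13
  have hS3 : (2*k^2+5*k+3)*N2 ∈ cycCoset q n δ := by
    have h13 := hmemi 3 (by omega); rw [hval 3] at h13; norm_num at h13; exact h13
  have hset : cycCoset q n δ = {(2*k^2+3*k+1)*N2, (2*k^2+3*k+2)*N2,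
      (2*k^2+5*k+4)*N2, (2*k^2+5*k+3)*N2} := by
    apply Finset.Subset.antisymm
    · intro x hx
      rcases hsub x hx with h|h|h|h <;> simp [h]
    · intro x hx
      simp only [Finset.mem_insert, Finset.mem_singleton] at hx
      rcases hx with rfl|rfl|rfl|rfl
      exacts [hS0, hS1, hS2, hS3]
  have hneN : ∀ a b : ℕ, a < b → a * N2 ≠ b * N2 := by
    intro a b hab
    have h14 := (Nat.mul_lt_mul_right hN2).mpr hab
    omega
  have hcard : (cycCoset q n δ).card = 4 := by
    rw [hset]
    rw [Finset.card_insert_of_notMem (by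
          simp [hneN _ _ (by linarith : 2*k^2+3*k+1 < 2*k^2+3*k+2),
            hneN _ _ (by linarith : 2*k^2+3*k+1 < 2*k^2+5*k+4),
            hneN _ _ (by linarith : 2*k^2+3*k+1 < 2*k^2+5*k+3)]),
        Finset.card_insert_of_notMem (by
          simp [hneN _ _ (by linarith : 2*k^2+3*k+2 < 2*k^2+5*k+4),
            hneN _ _ (by linarith : 2*k^2+3*k+2 < 2*k^2+5*k+3)]),
        Finset.card_insert_of_notMem (by
          simp [(hneN _ _ (by linarith : 2*k^2+5*k+3 < 2*k^2+5*k+4)).symm]),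
        Finset.card_singleton]
  -- δ is a coset leader
  have hgeδ : ∀ x ∈ cycCoset q n δ, δ ≤ x := by
    intro x hx
    rcases hsub x hx with rfl|rfl|rfl|rfl
    · rw [hδ]
    · rw [hδ]; exact Nat.mul_le_mul_right _ (by linarith)
    · rw [hδ]; exact Nat.mul_le_mul_right _ (by linarith)
    · rw [hδ]; exact Nat.mul_le_mul_right _ (by linarith)
  have hδmem : δ ∈ cosetLeaders q n := by
    rw [cosetLeaders, Finset.mem_filter, Finset.mem_range]
    exact ⟨hδ ▸ hbound _ (by nlinarith), hδ ▸ hS0, hgeδ⟩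
  -- facts for maximality
  have hodd : n % 2 = 1 := by
    have h15 : 2 ∣ q^m := dvd_pow ⟨k+1, by omega⟩ (by omega)
    rw [hnm]; omega
  have hMn : (2*k^2+3*k+1)*n = δ*q^2 + δ := by rw [hδ, hfac, hq]; ring
  have hq1dvd : (2*k+3) ∣ q^m - 1 := by
    have h9 : q^2 - 1 ∣ (q^2)^(m/2) - 1^(m/2) := Nat.sub_dvd_pow_sub_pow _ _ _
    rw [one_pow, ← pow_mul] at h9
    rw [show 2*(m/2) = m from by omega] at h9
    refine dvd_trans ⟨2*k+1, ?_⟩ h9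
    have h16 : q^2 = 4*k^2+8*k+4 := by rw [hq]; ring
    have h16b : (2*k+3)*(2*k+1) = 4*k^2+8*k+3 := by ring
    omega
  have hndvd2 : ¬ (2*k+3) ∣ n := by
    intro hdvd
    have h17 := Nat.dvd_sub hdvd hq1dvd
    rw [show n - (q^m - 1) = 2 from by omega] at h17
    have := Nat.le_of_dvd (by omega) h17
    omega
  have hcop : Nat.Coprime (2*k+3) (k+1) := by
    have h := Nat.gcd_dvd_left (2*k+3) (k+1)
    have h2 := Nat.gcd_dvd_right (2*k+3) (k+1)
    have h3 : Nat.gcd (2*k+3) (k+1) ∣ 2*(k+1) := Dvd.dvd.mul_left h2 2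
    have h4 := Nat.dvd_sub h h3
    rw [show (2*k+3) - 2*(k+1) = 1 from by omega] at h4
    exact Nat.dvd_one.mp h4
  have hmodn : ∀ a : ℕ, a * n ≡ 0 [MOD n] :=
    fun a => (Nat.modEq_zero_iff_dvd).mpr ⟨a, mul_comm _ _⟩
  -- maximality
  have hmaxL : ∀ s ∈ cosetLeaders q n, s ≤ δ := by
    intro s hs
    rw [cosetLeaders, Finset.mem_filter, Finset.mem_range] at hs
    obtain ⟨hsn, hsC, hmin⟩ := hs
    by_contra hcon
    push_neg at hcon
    have hδpos : 0 < δ := by rw [hδ]; exact Nat.mul_pos (by positivity) hN2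
    rcases lt_trichotomy n (2*s) with hbig | heq | hsmall
    · have hmm : s * q ^ m ≡ n - s [MOD n] := by
        apply Nat.ModEq.add_right_cancel' s
        rw [show s * q ^ m + s = s * n from by rw [hnm]; ring,
            show (n - s) + s = n from by omega]
        have hz1 : n ≡ 0 [MOD n] := by simpa using hmodn 1
        exact (hmodn s).trans hz1.symm
      have hx := memC s m (n - s) hmm (by omega)
      have := hmin _ hx
      omega
    · omega
    · set M := 2*k^2+3*k+1 with hM
      rcases lt_or_ge (s*q^2) (M*n) with hA | hge
      · have hlt2 : δ * q^2 < s * q^2 :=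
          (Nat.mul_lt_mul_right (pow_pos (show 0 < q by omega) 2)).mpr hcon
        have hmm : s * q ^ (m+2) ≡ M*n - s*q^2 [MOD n] := by
          apply Nat.ModEq.add_right_cancel' (s*q^2)
          rw [show s * q ^ (m+2) + s*q^2 = (s*q^2) * n from by rw [hnm]; ring,
              show (M*n - s*q^2) + s*q^2 = M*n from by omega]
          exact (hmodn _).trans (hmodn M).symm
        have hxlt : M*n < s*q^2 + s := by omega
        have hx := memC s (m+2) (M*n - s*q^2) hmm (by omega)
        have hfin := hmin _ hx
        omega
      · rcases lt_or_ge (s*q^2) (M*n + s) with hB1 | hB2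
        · have hmm : s * q^2 ≡ s*q^2 - M*n [MOD n] := by
            show s*q^2 % n = (s*q^2 - M*n) % n
            conv_lhs => rw [show s*q^2 = (s*q^2 - M*n) + M*n from by omega]
            rw [Nat.add_mul_mod_self_right]
          have hx := memC s 2 (s*q^2 - M*n) hmm (by omega)
          have hfin := hmin _ hx
          omega
        · have e3 : (2*k+1)*(s*(2*k+3)) + s = s * q^2 := by rw [hq]; ring
          have e4 : (2*k+1)*((k+1)*n) = M*n := by rw [hM]; ring
          have h11 : (k+1)*n ≤ s*(2*k+3) :=
            Nat.le_of_mul_le_mul_left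
              (show (2*k+1)*((k+1)*n) ≤ (2*k+1)*(s*(2*k+3)) from by omega)
              (show 0 < 2*k+1 from by omega)
          have hne3 : (k+1)*n ≠ s*(2*k+3) := by
            intro heq2
            have hdd : (2*k+3) ∣ (k+1)*n := ⟨s, by rw [heq2, mul_comm]⟩
            exact hndvd2 (hcop.dvd_of_dvd_mul_left hdd)
          have e6 : q*(2*s) = 2*(s*q) := by ring
          have e5 : q*n = 2*((k+1)*n) := by rw [hq]; ring
          have hsq : s*q < (k+1)*n := by
            have h18 : q*(2*s) < q*n := (Nat.mul_lt_mul_left (by omega)).mpr hsmall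
            omega
          have e7 : s*(2*k+3) = s*q + s := by rw [hq]; ring
          have hmm : s * q^(m+1) ≡ (k+1)*n - s*q [MOD n] := by
            apply Nat.ModEq.add_right_cancel' (s*q)
            rw [show s*q^(m+1) + s*q = (s*q)*n from by rw [hnm]; ring,
                show ((k+1)*n - s*q) + s*q = (k+1)*n from by omega]
            exact (hmodn _).trans (hmodn _).symm
          have hklt : (k+1)*n < s*q + s := by omega
          have hx := memC s (m+1) ((k+1)*n - s*q) hmm (by omega)
          have hfin := hmin _ hx
          omega
  exact ⟨⟨hδmem, hmaxL⟩, hcard⟩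


/-- for even prime power `q`, `m ≡ 2 (mod 4)`, `m ≥ 6`, `n = q^m+1`,
the largest coset leader is `δ_{1,n} = q(q-1)(q^m+1)/(2(q^2+1))` and `|C_{δ_{1,n}}| = 4`. -/
theorem stmt_1 (q m n : ℕ) (hq : ∃ e : ℕ, 0 < e ∧ q = 2 ^ e)
    (hm4 : m % 4 = 2) (hm : 6 ≤ m) (hn : n = q ^ m + 1) :
    nthLargestCosetLeader q n 1 = q * (q - 1) * (q ^ m + 1) / (2 * (q ^ 2 + 1)) ∧
    (cycCoset q n (q * (q - 1) * (q ^ m + 1) / (2 * (q ^ 2 + 1)))).card = 4 := by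
  obtain ⟨e, he, rfl⟩ := hq
  have hk : ∃ k : ℕ, 2^e = 2*k+2 := by
    have h1 : 2^e = 2*2^(e-1) := by
      rw [← pow_succ']
      congr 1; omega
    have h2 : 1 ≤ 2^(e-1) := Nat.one_le_two_pow
    exact ⟨2^(e-1) - 1, by omega⟩
  obtain ⟨k, hk⟩ := hk
  have hoddh : Odd (m/2) := ⟨m/4, by omega⟩
  have hdvd : ((2^e)^2 + 1) ∣ n := by
    rw [hn]
    obtain ⟨t, ht⟩ := hoddh
    have hmt : m = 2*(2*t+1) := by omega
    have hz : ((2^e : ℤ)^2 + 1) ∣ ((2^e : ℤ)^2)^(2*t+1) + 1 := by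
      have h5 := Odd.add_dvd_pow_add_pow ((2^e : ℤ)^2) 1 (⟨t, by ring⟩ : Odd (2*t+1))
      simpa using h5
    have hz2 : ((2^e : ℤ)^2 + 1) ∣ ((2^e : ℤ)^m + 1) := by
      rw [hmt, pow_mul]
      exact hz
    have hz3 : (((2^e)^2 + 1 : ℕ) : ℤ) ∣ (((2^e)^m + 1 : ℕ) : ℤ) := by push_cast; exact hz2
    exact_mod_cast hz3
  obtain ⟨N2, hN2⟩ := hdvd
  have hfac : n = ((2^e)^2+1) * N2 := hN2
  have hE : 2^e * (2^e - 1) * ((2^e)^m + 1) / (2*((2^e)^2+1)) = (2*k^2+3*k+1)*N2 := by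
    have h2 : 2^e - 1 = 2*k+1 := by omega
    have h1 : 2^e * (2^e - 1) * ((2^e)^m + 1) = (2*((2^e)^2+1)) * ((2*k^2+3*k+1)*N2) := by
      rw [h2, ← hn, hfac, hk]; ring
    rw [h1]
    exact Nat.mul_div_cancel_left _ (by positivity)
  obtain ⟨⟨hmem, hmax⟩, hcard⟩ := key (2^e) n N2 m k hk hn hfac hm (by omega)
  constructor
  · rw [hE]
    exact nth_largest_eq_max _ _ hmem hmax
  · rw [hE]; exact hcard
end

section
/- Let q be an even prime power (a power of 2) and n = q^2 + 1. For an integer a with 1 ≤ a ≤ n-1, a is a coset leader modulo n if and only if there exists an integer l with 0 ≤ l ≤ q/2 - 1 such that l(q+1) + 1 ≤ a ≤ (l+1)(q-1). Moreover, for every such coset leader a, the q-cyclotomic coset of a modulo n has exactly 4 elements. -/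
namespace Stmt3Aux

lemma mulq2 (q n x : ℕ) (hn : n = q^2+1) (hx1 : 1 ≤ x) (hx2 : x < n) :
    x * q^2 % n = n - x := by
  have key : x * q^2 = (n - x) + (x-1) * n := by
    zify [hx1, hx2.le]
    subst hn; push_cast; ring
  rw [key, Nat.add_mul_mod_self_right, Nat.mod_eq_of_lt (by omega)]

lemma ord4 (q n : ℕ) (hq2 : 2 ≤ q) (hn : n = q^2+1) : orderOf (q : ZMod n) = 4 := by
  have hn5 : 5 ≤ n := by nlinarith
  haveI : Fact (1 < n) := ⟨by omega⟩
  haveI : Fact (2 < n) := ⟨by omega⟩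
  haveI : NeZero n := ⟨by omega⟩
  have hsq : (q : ZMod n)^2 = -1 := by
    have h0 : ((q^2+1 : ℕ) : ZMod n) = 0 := by rw [← hn]; exact ZMod.natCast_self n
    push_cast at h0
    exact eq_neg_of_add_eq_zero_left h0
  have h4 : (q:ZMod n)^4 = 1 := by
    rw [show (4:ℕ)=2*2 from rfl, pow_mul, hsq]; ring
  have hd : orderOf (q:ZMod n) ∣ 4 := orderOf_dvd_of_pow_eq_one h4
  have h1 : (q:ZMod n) ≠ 1 := by
    intro h
    have := congrArg ZMod.val h
    rw [ZMod.val_cast_of_lt (by nlinarith), ZMod.val_one] at this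
    omega
  have h2 : (q:ZMod n)^2 ≠ 1 := by
    rw [hsq]; exact ZMod.neg_one_ne_one
  have hfin : IsOfFinOrder (q:ZMod n) := isOfFinOrder_iff_pow_eq_one.mpr ⟨4, by norm_num, h4⟩
  have hd0 : orderOf (q:ZMod n) ≠ 0 := (orderOf_pos_iff.mpr hfin).ne'
  have hdle : orderOf (q:ZMod n) ≤ 4 := Nat.le_of_dvd (by norm_num) hd
  have hd1 : orderOf (q:ZMod n) ≠ 1 := fun h => h1 (orderOf_eq_one_iff.mp h)
  have hd2 : orderOf (q:ZMod n) ≠ 2 := fun h => h2 (h ▸ pow_orderOf_eq_one _)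
  have hd3 : orderOf (q:ZMod n) ≠ 3 := by intro h; rw [h] at hd; norm_num at hd
  omega

lemma coprime_qn (q n : ℕ) (hn : n = q^2+1) : Nat.Coprime q n := by
  rw [hn, pow_two, show q*q+1 = 1+q*q by ring]
  simpa using (Nat.coprime_add_mul_right_right q 1 q)

lemma b_pos (q n : ℕ) (hn : n = q^2+1) (a : ℕ) (ha1 : 1 ≤ a) (ha2 : a ≤ q^2) :
    1 ≤ a * q % n := by
  rcases Nat.eq_zero_or_pos (a * q % n) with h | h
  · exfalso
    have hdvd : n ∣ a * q := Nat.dvd_of_mod_eq_zero h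
    have : n ∣ a := Nat.Coprime.dvd_of_dvd_mul_right
      (Nat.Coprime.symm (coprime_qn q n hn)) hdvd
    have := Nat.le_of_dvd (by omega) this
    omega
  · exact h

lemma coset_mem (q n : ℕ) (hq2 : 2 ≤ q) (hn : n = q^2+1) (a : ℕ) (ha1 : 1 ≤ a)
    (ha2 : a ≤ q^2) (x : ℕ) :
    x ∈ cycCoset q n a ↔ x = a ∨ x = a*q % n ∨ x = n - a ∨ x = n - a*q % n := by
  have hb1 : 1 ≤ a*q % n := b_pos q n hn a ha1 ha2
  have hblt : a*q % n < n := Nat.mod_lt _ (by omega)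
  have e0 : a * q^0 % n = a := by simp [Nat.mod_eq_of_lt (show a < n by omega)]
  have e2 : a * q^2 % n = n - a := mulq2 q n a hn ha1 (by omega)
  have e3 : a * q^3 % n = n - a*q % n := by
    rw [show a*q^3 = (a*q)*q^2 by ring, ← Nat.mod_mul_mod]
    exact mulq2 q n _ hn hb1 hblt
  simp only [cycCoset, ord4 q n hq2 hn, Finset.mem_image, Finset.mem_range]
  constructor
  · rintro ⟨j, hj, rfl⟩
    interval_cases j
    · exact Or.inl e0
    · exact Or.inr (Or.inl (by rw [pow_one]))
    · exact Or.inr (Or.inr (Or.inl e2))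
    · exact Or.inr (Or.inr (Or.inr e3))
  · rintro (rfl|rfl|rfl|rfl)
    exacts [⟨0, by norm_num, e0⟩, ⟨1, by norm_num, by rw [pow_one]⟩,
      ⟨2, by norm_num, e2⟩, ⟨3, by norm_num, e3⟩]

lemma b_val1' (q n a m r : ℕ) (hq2 : 2 ≤ q) (hn : n = q^2+1) (ha2 : a ≤ q^2)
    (hmr : m*q + r = a) (hrq : r < q) (hr : 1 ≤ r) : a * q % n + m = r*q := by
  have hqq : q * q = q^2 := (pow_two q).symm
  have hm : m + 1 ≤ q := by
    by_contra h
    push_neg at h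
    have h2 : q * q ≤ m * q := mul_le_mul_left (by omega) q
    linarith
  have hmlt : m ≤ r * q := by
    have : 1 * q ≤ r * q := mul_le_mul_left hr q
    linarith
  have hbound : r * q < n := by
    have : (r + 1) * q ≤ q * q := mul_le_mul_left hrq q
    have he : (r + 1) * q = r * q + q := by ring
    linarith
  have key : a * q = (r * q - m) + m * n := by
    have hmrz : (m : ℤ) * q + (r : ℤ) = a := by exact_mod_cast hmr
    have hnz : ((n : ℕ) : ℤ) = (q:ℤ)^2 + 1 := by exact_mod_cast hn
    zify [hmlt]
    linear_combination (-(q:ℤ)) * hmrz - (m : ℤ) * hnz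
  rw [key, Nat.add_mul_mod_self_right, Nat.mod_eq_of_lt (by omega)]
  omega

lemma b_val0' (q n a m r : ℕ) (hq2 : 2 ≤ q) (hn : n = q^2+1) (ha1 : 1 ≤ a) (ha2 : a ≤ q^2)
    (hmr : m*q + r = a) (hr : r = 0) : a * q % n + m = n := by
  have hqq : q * q = q^2 := (pow_two q).symm
  have hm1 : 1 ≤ m := by
    rcases Nat.eq_zero_or_pos m with h | h
    · rw [h, zero_mul] at hmr; omega
    · exact h
  have hmq : m ≤ q := by
    by_contra h
    push_neg at h
    have h2 : (q+1) * q ≤ m * q := mul_le_mul_left (by omega) q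
    have he : (q+1)*q = q*q + q := by ring
    linarith
  have hmn : m < n := by nlinarith
  have key : a * q = (n - m) + (m - 1) * n := by
    have hmrz : (m : ℤ) * q + (r : ℤ) = a := by exact_mod_cast hmr
    have hnz : ((n : ℕ) : ℤ) = (q:ℤ)^2 + 1 := by exact_mod_cast hn
    have hrz : (r : ℤ) = 0 := by exact_mod_cast hr
    zify [hm1, hmn.le]
    linear_combination (-(q:ℤ)) * hmrz - (m : ℤ) * hnz + (q:ℤ) * hrz
  rw [key, Nat.add_mul_mod_self_right, Nat.mod_eq_of_lt (by omega)]
  omega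

lemma core_strict (q n a b m r : ℕ) (hn : q*q + 1 = n)
    (hmr : m*q + r = a) (hrq : r < q) (hbv : b + m = r*q)
    (hc1 : m + 1 ≤ r) (hc2 : r + m + 1 ≤ q) :
    a < b ∧ 2*a < n ∧ a + b < n := by
  have hA : m*q + q ≤ r*q := by
    have h := mul_le_mul_left hc1 q
    have : (m+1)*q = m*q + q := by ring
    linarith
  have hB : r*q + m*q + q ≤ q*q := by
    have h := mul_le_mul_left hc2 q
    have : (r+m+1)*q = r*q + m*q + q := by ring
    linarith
  refine ⟨by linarith, by linarith, by linarith⟩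

lemma core (q n a b m r : ℕ) (hq2 : 2 ≤ q) (hqe : q % 2 = 0) (hn : q*q + 1 = n)
    (hmr : m*q + r = a) (hrq : r < q) (ha1 : 1 ≤ a) (hb1 : 1 ≤ b) (hblt : b < n)
    (hb0 : r = 0 → b + m = n) (hbv : 1 ≤ r → b + m = r*q) :
    ((a ≤ b ∧ a ≤ n - a ∧ a ≤ n - b) ↔ (m + 1 ≤ r ∧ r + m + 1 ≤ q)) := by
  constructor
  · rintro ⟨h1, h2, h3⟩
    by_contra hcon
    rcases Nat.eq_zero_or_pos r with hr0 | hrpos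
    · have hb0' := hb0 hr0
      have hm1 : 1 ≤ m := by
        rcases Nat.eq_zero_or_pos m with h | h
        · rw [h, zero_mul] at hmr; omega
        · exact h
      have ham : a ≤ m := by omega
      have : m*2 ≤ m*q := mul_le_mul_right hq2 m
      linarith
    · have hbv' := hbv hrpos
      rcases le_or_gt r m with hrm | hrm
      · have hle : r*q ≤ m*q := mul_le_mul_left hrm q
        linarith
      · have hge : q ≤ r + m := by omega
        rcases le_or_gt q (2*m) with hq2m | hq2m
        · have h2' : 2*a ≤ n := by omega
          have hgq : q*q ≤ 2*(m*q) := by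
            have h := mul_le_mul_left hq2m q
            have : (2*m)*q = 2*(m*q) := by ring
            linarith
          linarith
        · have h2m : 2*m + 2 ≤ q := by omega
          have h3' : a + b ≤ n := by omega
          have hgq : q*q ≤ r*q + m*q := by
            have h := mul_le_mul_left hge q
            have : (r+m)*q = r*q + m*q := by ring
            linarith
          linarith
  · rintro ⟨hc1, hc2⟩
    obtain ⟨s1, s2, s3⟩ := core_strict q n a b m r hn hmr hrq (hbv (by omega)) hc1 hc2
    exact ⟨s1.le, by omega, by omega⟩

lemma leader_iff (q n : ℕ) (hq2 : 2 ≤ q) (hqe : q % 2 = 0) (hn : n = q^2+1) (a : ℕ)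
    (ha1 : 1 ≤ a) (ha2 : a ≤ q^2) :
    IsCosetLeader q n a ↔ (a/q + 1 ≤ a % q ∧ a % q + a/q + 1 ≤ q) := by
  have hmem := coset_mem q n hq2 hn a ha1 ha2
  have hnpos : 0 < n := by rw [hn]; positivity
  obtain ⟨b, hb⟩ : ∃ b, a * q % n = b := ⟨_, rfl⟩
  rw [hb] at hmem
  have hmr : (a/q) * q + a % q = a := by rw [mul_comm]; exact Nat.div_add_mod a q
  have hrq : a % q < q := Nat.mod_lt _ (by omega)
  obtain ⟨m, hm'⟩ : ∃ m, a / q = m := ⟨_, rfl⟩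
  obtain ⟨r, hr'⟩ : ∃ r, a % q = r := ⟨_, rfl⟩
  simp only [hm', hr'] at hmr hrq ⊢
  have hb1 : 1 ≤ b := hb ▸ b_pos q n hn a ha1 ha2
  have hblt : b < n := hb ▸ Nat.mod_lt _ hnpos
  have hiff : IsCosetLeader q n a ↔ (a ≤ b ∧ a ≤ n - a ∧ a ≤ n - b) := by
    constructor
    · rintro ⟨_, h2⟩
      exact ⟨h2 _ ((hmem _).mpr (Or.inr (Or.inl rfl))),
        h2 _ ((hmem _).mpr (Or.inr (Or.inr (Or.inl rfl)))),
        h2 _ ((hmem _).mpr (Or.inr (Or.inr (Or.inr rfl))))⟩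
    · rintro ⟨h1, h2, h3⟩
      refine ⟨(hmem a).mpr (Or.inl rfl), ?_⟩
      intro x hx
      rcases (hmem x).mp hx with rfl|rfl|rfl|rfl
      exacts [le_rfl, h1, h2, h3]
  rw [hiff]
  exact core q n a b m r hq2 hqe (by rw [hn, pow_two]) hmr hrq ha1 hb1 hblt
    (fun h => by rw [← hb]; exact b_val0' q n a m r hq2 hn ha1 ha2 hmr h)
    (fun h => by rw [← hb]; exact b_val1' q n a m r hq2 hn ha2 hmr hrq h)

lemma n_odd (q n : ℕ) (hqe : q % 2 = 0) (hn : n = q^2+1) : n % 2 = 1 := by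
  obtain ⟨k, hk⟩ : 2 ∣ q := by omega
  subst hk
  have : (2*k)^2 + 1 = 2*(2*k*k) + 1 := by ring
  rw [hn, this]
  omega

lemma card4 (q n : ℕ) (hq2 : 2 ≤ q) (hqe : q % 2 = 0) (hn : n = q^2+1) (a : ℕ)
    (ha1 : 1 ≤ a) (ha2 : a ≤ q^2) (hc1 : a/q + 1 ≤ a % q) (hc2 : a % q + a/q + 1 ≤ q) :
    (cycCoset q n a).card = 4 := by
  have hmem := coset_mem q n hq2 hn a ha1 ha2
  have hnpos : 0 < n := by rw [hn]; positivity
  obtain ⟨b, hb⟩ : ∃ b, a * q % n = b := ⟨_, rfl⟩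
  rw [hb] at hmem
  have hmr : (a/q) * q + a % q = a := by rw [mul_comm]; exact Nat.div_add_mod a q
  have hrq : a % q < q := Nat.mod_lt _ (by omega)
  obtain ⟨m, hm'⟩ : ∃ m, a / q = m := ⟨_, rfl⟩
  obtain ⟨r, hr'⟩ : ∃ r, a % q = r := ⟨_, rfl⟩
  simp only [hm', hr'] at hmr hrq hc1 hc2
  have hb1 : 1 ≤ b := hb ▸ b_pos q n hn a ha1 ha2
  have hblt : b < n := hb ▸ Nat.mod_lt _ hnpos
  have hbv : b + m = r * q := hb ▸ b_val1' q n a m r hq2 hn ha2 hmr hrq (by omega)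
  obtain ⟨hab, h2a, habn⟩ := core_strict q n a b m r
    (by rw [hn, pow_two]) hmr hrq hbv hc1 hc2
  have hno := n_odd q n hqe hn
  have h2b : 2 * b ≠ n := by omega
  have hset : cycCoset q n a = {a, b, n - a, n - b} := by
    apply Finset.ext
    intro x
    rw [hmem x]
    simp only [Finset.mem_insert, Finset.mem_singleton]
  rw [hset]
  rw [Finset.card_insert_of_notMem (by
    simp only [Finset.mem_insert, Finset.mem_singleton]; push_neg
    refine ⟨by omega, by omega, by omega⟩)]
  rw [Finset.card_insert_of_notMem (by
    simp only [Finset.mem_insert, Finset.mem_singleton]; push_neg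
    refine ⟨by omega, by omega⟩)]
  rw [Finset.card_insert_of_notMem (by
    simp only [Finset.mem_singleton]; omega)]
  rfl

end Stmt3Aux

open Stmt3Aux in
/-- for even prime power `q` and `n = q^2+1`, an integer `1 ≤ a ≤ n-1`
is a coset leader iff `l(q+1)+1 ≤ a ≤ (l+1)(q-1)` for some `0 ≤ l ≤ q/2 - 1`;
moreover every such coset leader has a coset of exactly 4 elements. -/
theorem stmt_3 (q n : ℕ) (hq : ∃ e : ℕ, 0 < e ∧ q = 2 ^ e) (hn : n = q ^ 2 + 1) :
    (∀ a : ℕ, 1 ≤ a → a ≤ n - 1 →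
      (IsCosetLeader q n a ↔
        ∃ l : ℕ, l ≤ q / 2 - 1 ∧ l * (q + 1) + 1 ≤ a ∧ a ≤ (l + 1) * (q - 1))) ∧
    (∀ a : ℕ, 1 ≤ a → a ≤ n - 1 → IsCosetLeader q n a → (cycCoset q n a).card = 4) := by
  obtain ⟨e, he, hq'⟩ := hq
  have hq2 : 2 ≤ q := by
    rw [hq']
    calc 2 = 2^1 := rfl
    _ ≤ 2^e := Nat.pow_le_pow_right (by norm_num) he
  have hqe : q % 2 = 0 := by
    have : 2 ∣ q := hq' ▸ dvd_pow_self 2 he.ne'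
    omega
  have hn1 : n - 1 = q^2 := by rw [hn]; simp
  constructor
  · intro a ha1 ha2
    rw [hn1] at ha2
    rw [leader_iff q n hq2 hqe hn a ha1 ha2]
    have hmr : (a/q) * q + a % q = a := by rw [mul_comm]; exact Nat.div_add_mod a q
    have hrq : a % q < q := Nat.mod_lt _ (by omega)
    obtain ⟨m, hm'⟩ : ∃ m, a / q = m := ⟨_, rfl⟩
    obtain ⟨r, hr'⟩ : ∃ r, a % q = r := ⟨_, rfl⟩
    simp only [hm', hr'] at hmr hrq ⊢
    constructor
    · rintro ⟨hc1, hc2⟩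
      refine ⟨m, by omega, ?_, ?_⟩
      · have : m * (q+1) = m*q + m := by ring
        linarith
      · have hE : (m + 1) * (q - 1) + (m + 1) = (m + 1) * q := by
          calc (m + 1) * (q - 1) + (m + 1) = (m + 1) * ((q-1) + 1) := by ring
          _ = (m + 1) * q := by rw [Nat.sub_add_cancel (by omega)]
        have hE2 : (m + 1) * q = m * q + q := by ring
        linarith
    · rintro ⟨l, hl, h1, h2⟩
      have hE : (l + 1) * (q - 1) + (l + 1) = (l + 1) * q := by
        calc (l + 1) * (q - 1) + (l + 1) = (l + 1) * ((q-1) + 1) := by ring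
        _ = (l + 1) * q := by rw [Nat.sub_add_cancel (by omega)]
      have hE2 : (l + 1) * q = l * q + q := by ring
      have hE3 : l * (q+1) = l * q + l := by ring
      have hdiv : m = l := by
        rw [← hm']; exact Nat.div_eq_of_lt_le (by linarith) (by linarith)
      subst hdiv
      constructor
      · linarith
      · linarith
  · intro a ha1 ha2 hL
    rw [hn1] at ha2
    obtain ⟨hc1, hc2⟩ := (leader_iff q n hq2 hqe hn a ha1 ha2).mp hL
    exact card4 q n hq2 hqe hn a ha1 ha2 hc1 hc2
end

section
/- Let q be an odd prime power and n = q^2 + 1. For an integer a with 1 ≤ a ≤ n-1, a is a coset leader modulo n if and only if either a = (q^2+1)/2, or there exists an integer l with 0 ≤ l ≤ (q-3)/2 such that l(q+1) + 1 ≤ a ≤ (l+1)(q-1). Moreover, the q-cyclotomic coset of (q^2+1)/2 modulo n has exactly 1 element, and every other such coset leader a has q-cyclotomic coset modulo n with exactly 4 elements. -/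
/-- The multiplicative order of `q` mod `q^2+1` is `4`. -/
lemma aux_ord (q : ℕ) (hq : 3 ≤ q) : orderOf ((q : ZMod (q^2+1))) = 4 := by
  have hn : 2 < q^2+1 := by nlinarith
  haveI : NeZero (q^2+1) := ⟨by positivity⟩
  haveI : Fact (2 < q^2+1) := ⟨hn⟩
  haveI : Fact (1 < q^2+1) := ⟨by omega⟩
  have hsq : (q : ZMod (q^2+1))^2 = -1 := by
    have h0 : ((q^2+1 : ℕ) : ZMod (q^2+1)) = 0 := ZMod.natCast_self _
    push_cast at h0
    linear_combination h0
  have h4 : (q : ZMod (q^2+1))^4 = 1 := by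
    have h : ((q:ZMod (q^2+1))^2)^2 = 1 := by rw [hsq]; ring
    simpa [← pow_mul] using h
  have hd : orderOf (q : ZMod (q^2+1)) ∣ 4 := orderOf_dvd_of_pow_eq_one h4
  have hne1 : (q : ZMod (q^2+1)) ≠ 1 := by
    intro h
    have hv : (q : ZMod (q^2+1)).val = q := by
      rw [ZMod.val_natCast, Nat.mod_eq_of_lt]; nlinarith
    rw [h, ZMod.val_one] at hv; omega
  have hd1 : orderOf (q : ZMod (q^2+1)) ≠ 1 := fun h => hne1 (orderOf_eq_one_iff.mp h)
  have hd2 : orderOf (q : ZMod (q^2+1)) ≠ 2 := by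
    intro h
    have hp := pow_orderOf_eq_one (q : ZMod (q^2+1))
    rw [h, hsq] at hp
    exact ZMod.neg_one_ne_one hp
  have hd0 : orderOf (q : ZMod (q^2+1)) ≠ 0 := by
    intro h; rw [h] at hd; norm_num at hd
  have hd3 : orderOf (q : ZMod (q^2+1)) ≠ 3 := by
    intro h; rw [h] at hd; norm_num at hd
  have hle : orderOf (q : ZMod (q^2+1)) ≤ 4 := Nat.le_of_dvd (by norm_num) hd
  omega

/-- Multiplying by `q^2` mod `q^2+1` is negation. -/
lemma aux_neg (q b : ℕ) (hb1 : 1 ≤ b) (hb2 : b < q^2+1) :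
    (b * q^2) % (q^2+1) = (q^2+1) - b := by
  have key : b * q^2 = (q^2+1) * (b-1) + ((q^2+1) - b) := by
    zify [hb1, hb2.le]
    ring
  rw [key, Nat.mul_add_mod, Nat.mod_eq_of_lt (by omega)]

/-- `(q^2+1)/2` is fixed by multiplication by `q` mod `q^2+1`. -/
lemma aux_half (q e : ℕ) (he : q = 2*e+1) (h1e : 1 ≤ e) :
    ((q^2+1)/2 * q) % (q^2+1) = (q^2+1)/2 := by
  subst he
  have h2 : ((2*e+1)^2+1)/2 = 2*e^2+2*e+1 := by
    have h : (2*e+1)^2 = 4*e^2+4*e+1 := by ring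
    omega
  rw [h2]
  have h3 : (2*e^2+2*e+1) * (2*e+1) = ((2*e+1)^2+1) * e + (2*e^2+2*e+1) := by ring
  rw [h3, Nat.mul_add_mod, Nat.mod_eq_of_lt (by nlinarith)]

lemma aux_rpos (q a : ℕ) (hq : 3 ≤ q) (h1 : 1 ≤ a) (h2 : a < q^2+1) :
    1 ≤ a*q % (q^2+1) := by
  rcases Nat.eq_zero_or_pos (a*q % (q^2+1)) with h | h
  · exfalso
    have hdvd : (q^2+1) ∣ a*q := Nat.dvd_of_mod_eq_zero h
    have hcop : Nat.Coprime (q^2+1) q := by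
      have h5 := (Nat.coprime_add_mul_left_left 1 q q).mpr (Nat.coprime_one_left q)
      simpa [pow_two, add_comm] using h5
    have h6 : (q^2+1) ∣ a := hcop.dvd_of_dvd_mul_right hdvd
    have := Nat.le_of_dvd (by omega) h6
    omega
  · omega

/-- Explicit description of the coset of `a` mod `q^2+1`. -/
lemma aux_coset (q a : ℕ) (hq : 3 ≤ q) (h1 : 1 ≤ a) (h2 : a < q^2+1) :
    cycCoset q (q^2+1) a =
      {a, a*q % (q^2+1), (q^2+1) - a, (q^2+1) - a*q % (q^2+1)} := by
  unfold cycCoset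
  rw [aux_ord q hq, show Finset.range 4 = {0,1,2,3} from by decide]
  have e0 : a * q^0 % (q^2+1) = a := by simp [Nat.mod_eq_of_lt h2]
  have e2 : a * q^2 % (q^2+1) = (q^2+1) - a := aux_neg q a h1 h2
  have e3 : a * q^3 % (q^2+1) = (q^2+1) - a*q % (q^2+1) := by
    have hr1 := aux_rpos q a hq h1 h2
    have hrlt : a*q % (q^2+1) < q^2+1 := Nat.mod_lt _ (by positivity)
    have h5 : a * q^3 % (q^2+1) = (a*q % (q^2+1)) * q^2 % (q^2+1) := by
      conv_lhs => rw [show a*q^3 = (a*q)*q^2 by ring]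
      rw [Nat.mod_mul_mod]
    rw [h5, aux_neg q _ hr1 hrlt]
  simp [e0, e2, e3, Nat.mod_eq_of_lt h2]

/-- Numerical criterion for being a coset leader mod `q^2+1`. -/
lemma aux_leader (q a : ℕ) (hq : 3 ≤ q) (h1 : 1 ≤ a) (h2 : a < q^2+1) :
    IsCosetLeader q (q^2+1) a ↔
      (a ≤ a*q % (q^2+1) ∧ 2*a ≤ q^2+1 ∧ a + a*q % (q^2+1) ≤ q^2+1) := by
  have hr1 := aux_rpos q a hq h1 h2
  have hrlt : a*q % (q^2+1) < q^2+1 := Nat.mod_lt _ (by positivity)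
  unfold IsCosetLeader
  rw [aux_coset q a hq h1 h2]
  constructor
  · rintro ⟨hmem, hall⟩
    refine ⟨hall _ (by simp), ?_, ?_⟩
    · have := hall ((q^2+1) - a) (by simp); omega
    · have := hall ((q^2+1) - a*q % (q^2+1)) (by simp); omega
  · rintro ⟨hA, hB, hC⟩
    refine ⟨by simp, ?_⟩
    intro x hx
    simp only [Finset.mem_insert, Finset.mem_singleton] at hx
    rcases hx with h|h|h|h <;> omega

set_option maxHeartbeats 1000000 in
/-- Numbers in the intervals `[l(q+1)+1, (l+1)(q-1)]` satisfy the (strict) leader conditions. -/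
lemma aux_interval (q e a l : ℕ) (he : q = 2*e+1) (h1e : 1 ≤ e)
    (hl : l + 1 ≤ e) (hlo : l*(q+1)+1 ≤ a) (hhi : a ≤ (l+1)*(q-1)) :
    a < a*q % (q^2+1) ∧ a + a*q % (q^2+1) < q^2+1 ∧ 2*a < q^2+1 := by
  subst he
  have hhi' : a ≤ (l+1)*(2*e) := by simpa using hhi
  have hlo' : l*(2*e+2)+1 ≤ a := by nlinarith [hlo]
  have hP : l*(2*e+2) ≤ a := by omega
  set t := a - l*(2*e+2) with htdef
  have ha : a = l*(2*e+2) + t := by omega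
  have ht1 : 1 ≤ t := by omega
  have ht2 : t + 2*l ≤ 2*e := by nlinarith [ha, hhi']
  have hkey : a * (2*e+1) = ((2*e+1)^2+1) * l + (t*(2*e+1) + l*(2*e)) := by
    rw [ha]; ring
  have hmul : (t + 2*l)*(2*e+1) ≤ (2*e)*(2*e+1) := Nat.mul_le_mul_right _ ht2
  have hRlt : t*(2*e+1) + l*(2*e) < (2*e+1)^2+1 := by nlinarith [hmul]
  have hrval : a * (2*e+1) % ((2*e+1)^2+1) = t*(2*e+1) + l*(2*e) := by
    rw [hkey, Nat.mul_add_mod, Nat.mod_eq_of_lt hRlt]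
  rw [hrval]
  have hte : 1*e ≤ t*e := Nat.mul_le_mul_right _ ht1
  have hmul2 : (t + 2*l)*(2*e) ≤ (2*e)*(2*e) := Nat.mul_le_mul_right _ ht2
  have hmul3 : (l+1)*e ≤ e*e := Nat.mul_le_mul_right _ hl
  refine ⟨by nlinarith [hte, ha], by nlinarith [hmul2, ha, ht2], by nlinarith [hmul3, ha, ht2]⟩

set_option maxHeartbeats 1000000 in
/-- A coset leader distinct from `(q^2+1)/2` lies in one of the intervals. -/
lemma aux_fwd (q e a : ℕ) (he : q = 2*e+1) (h1e : 1 ≤ e) (h1 : 1 ≤ a)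
    (hA : a ≤ a*q % (q^2+1)) (hB : 2*a ≤ q^2+1) (hC : a + a*q % (q^2+1) ≤ q^2+1)
    (hne : a ≠ (q^2+1)/2) :
    ∃ l, l + 1 ≤ e ∧ l*(q+1)+1 ≤ a ∧ a ≤ (l+1)*(q-1) := by
  subst he
  set n := (2*e+1)^2+1 with hn
  set r := a * (2*e+1) % n with hr
  set k := a * (2*e+1) / n with hk
  have hdm : n * k + r = a * (2*e+1) := Nat.div_add_mod _ _
  have hrlt : r < n := Nat.mod_lt _ (by positivity)
  have hnval : n = (2*e+1)^2+1 := hn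
  have hkq : k * (2*e+1) ≤ a := by
    by_contra hcon
    push_neg at hcon
    have h2 : (a+1) * (2*e+1) ≤ (k*(2*e+1)) * (2*e+1) := Nat.mul_le_mul_right _ hcon
    nlinarith [hdm, hrlt]
  have ha : a = k*(2*e+1) + (a - k*(2*e+1)) := by omega
  set u := a - k*(2*e+1) with hu
  have huq : u * (2*e+1) = k + r := by nlinarith [hdm, ha]
  have hu1 : k + 1 ≤ u := by
    by_contra hcon
    push_neg at hcon
    have h3 : u * (2*e+1) ≤ k * (2*e+1) := Nat.mul_le_mul_right _ (by omega)
    have hsum : u + k = 0 := by linarith [hA, ha, huq, h3]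
    have hu0 : u = 0 := by omega
    rw [hu0] at huq
    simp at huq
    omega
  have hukq : u + k + 1 ≤ 2*e+1 := by
    by_contra hcon
    push_neg at hcon
    have h2 : (2*e+1) * (2*e+1) ≤ (u+k)*(2*e+1) := Nat.mul_le_mul_right _ (by omega)
    have hu2 : u ≤ k + 1 := by nlinarith [hC, huq, ha, h2, hrlt]
    have hue : u = k + 1 := by omega
    have hek : e ≤ k := by omega
    have h3 : e*(2*e+1) ≤ k*(2*e+1) := Nat.mul_le_mul_right _ hek
    have h2a : 2*a = 4*(e*e)+4*e+2 := by nlinarith [hB, ha, hue, h3]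
    have hnn : n = 4*(e*e)+4*e+2 := by rw [hnval]; ring
    rw [hnn] at hne
    omega
  refine ⟨k, by omega, by nlinarith [ha, hu1], ?_⟩
  have hq1 : (2*e+1) - 1 = 2*e := by omega
  rw [hq1]
  nlinarith [ha, hukq]

/-- for odd prime power `q` and `n = q^2+1`, an integer `1 ≤ a ≤ n-1` is a
coset leader iff `a = (q^2+1)/2` or `l(q+1)+1 ≤ a ≤ (l+1)(q-1)` for some `0 ≤ l ≤ (q-3)/2`;
moreover `|C_{(q^2+1)/2}| = 1` and every other such coset leader has coset of 4 elements. -/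
theorem stmt_6 (q n : ℕ) (hq : IsPrimePow q) (hodd : Odd q) (hn : n = q ^ 2 + 1) :
    (∀ a : ℕ, 1 ≤ a → a ≤ n - 1 →
      (IsCosetLeader q n a ↔ a = (q ^ 2 + 1) / 2 ∨
        ∃ l : ℕ, l ≤ (q - 3) / 2 ∧ l * (q + 1) + 1 ≤ a ∧ a ≤ (l + 1) * (q - 1))) ∧
    (cycCoset q n ((q ^ 2 + 1) / 2)).card = 1 ∧
    (∀ a : ℕ, 1 ≤ a → a ≤ n - 1 → IsCosetLeader q n a → a ≠ (q ^ 2 + 1) / 2 →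
      (cycCoset q n a).card = 4) := by
  have hq2 : 2 ≤ q := hq.two_le
  obtain ⟨e, he⟩ := hodd
  have hq3 : 3 ≤ q := by omega
  have h1e : 1 ≤ e := by omega
  obtain ⟨E, hE⟩ : ∃ E, q^2 = 4*E+4*e+1 := ⟨e*e, by subst he; ring⟩
  subst hn
  have hhalf1 : 1 ≤ (q^2+1)/2 := by omega
  have hhalf2 : (q^2+1)/2 < q^2+1 := by omega
  refine ⟨?_, ?_, ?_⟩
  · intro a ha1 ha2
    have ha2' : a < q^2+1 := by omega
    rw [aux_leader q a hq3 ha1 ha2']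
    constructor
    · rintro ⟨hA, hB, hC⟩
      by_cases hhalf : a = (q^2+1)/2
      · exact Or.inl hhalf
      · obtain ⟨l, hl1, hl2, hl3⟩ := aux_fwd q e a he h1e ha1 hA hB hC hhalf
        exact Or.inr ⟨l, by omega, hl2, hl3⟩
    · rintro (rfl | ⟨l, hl1, hl2, hl3⟩)
      · rw [aux_half q e he h1e]
        omega
      · obtain ⟨hs1, hs2, hs3⟩ := aux_interval q e a l he h1e (by omega) hl2 hl3
        exact ⟨le_of_lt hs1, by omega, le_of_lt hs2⟩
  · rw [aux_coset q _ hq3 hhalf1 hhalf2, aux_half q e he h1e]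
    have hsub : (q^2+1) - (q^2+1)/2 = (q^2+1)/2 := by omega
    rw [hsub]
    simp
  · intro a ha1 ha2 hlead hne
    have ha2' : a < q^2+1 := by omega
    rw [aux_leader q a hq3 ha1 ha2'] at hlead
    obtain ⟨hA, hB, hC⟩ := hlead
    obtain ⟨l, hl1, hl2, hl3⟩ := aux_fwd q e a he h1e ha1 hA hB hC hne
    obtain ⟨hs1, hs2, hs3⟩ := aux_interval q e a l he h1e hl1 hl2 hl3
    have hrlt : a*q % (q^2+1) < q^2+1 := Nat.mod_lt _ (by positivity)
    have hrne : 2*(a*q % (q^2+1)) ≠ q^2+1 := by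
      intro h2r
      have hr2 : a*q % (q^2+1) = (q^2+1)/2 := by omega
      have hx : a * q^2 % (q^2+1) = (q^2+1) - a := aux_neg q a ha1 ha2'
      have hy : a * q^2 % (q^2+1) = (a*q % (q^2+1)) * q % (q^2+1) := by
        conv_lhs => rw [show a*q^2 = (a*q)*q by ring]
        rw [Nat.mod_mul_mod]
      rw [hr2, aux_half q e he h1e] at hy
      omega
    rw [aux_coset q a hq3 ha1 ha2']
    rw [Finset.card_insert_of_notMem
        (by simp only [Finset.mem_insert, Finset.mem_singleton]; push_neg
            refine ⟨by omega, by omega, by omega⟩),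
      Finset.card_insert_of_notMem
        (by simp only [Finset.mem_insert, Finset.mem_singleton]; push_neg
            refine ⟨by omega, by omega⟩),
      Finset.card_insert_of_notMem (by simp only [Finset.mem_singleton]; omega),
      Finset.card_singleton]
end

section
/- Let q be an odd prime power, λ an integer with 2 ≤ λ < q+1 and λ ∣ (q+1), m = 2t+1 ≥ 5, and n = (q^m+1)/λ. Then: (1) if t is even, the smallest positive integer i with q ∤ i that is not a coset leader modulo n is (q^{t+1}+1)/λ - ⌊q/λ⌋; (2) if t is odd, the smallest positive integer i with q ∤ i that is not a coset leader modulo n is (q^{t+1}-1)/λ - ⌊(q-2)/λ⌋. -/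
private lemma modeq_pow_reduce {q n M : ℕ} (h : q ^ M ≡ 1 [MOD n]) (j : ℕ) :
    q ^ j ≡ q ^ (j % M) [MOD n] := by
  conv_lhs => rw [← Nat.div_add_mod j M]
  rw [pow_add, pow_mul]
  calc (q ^ M) ^ (j / M) * q ^ (j % M)
      ≡ 1 ^ (j / M) * q ^ (j % M) [MOD n] := Nat.ModEq.mul_right _ (h.pow _)
    _ = q ^ (j % M) := by rw [one_pow, one_mul]

private lemma ordPos {q n m : ℕ} (hm : 0 < m) (hn1 : 1 < n) (hdvd : n ∣ q ^ m + 1) :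
    0 < orderOf ((q : ZMod n)) ∧ q ^ (2 * m) ≡ 1 [MOD n] := by
  have hq1 : 1 ≤ q := by
    rcases Nat.eq_zero_or_pos q with rfl | h
    · rw [Nat.zero_pow (by omega)] at hdvd
      exact absurd (Nat.le_of_dvd one_pos hdvd) (by omega)
    · exact h
  have hqm1 : 1 ≤ q ^ m := Nat.one_le_pow _ _ hq1
  have hfac : q ^ (2 * m) - 1 = (q ^ m + 1) * (q ^ m - 1) := by
    obtain ⟨a, ha⟩ : ∃ a, q ^ m = a + 1 := ⟨q ^ m - 1, by omega⟩
    rw [two_mul, pow_add, ha]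
    have e1 : (a + 1) * (a + 1) = a * a + 2 * a + 1 := by ring
    have e2 : (a + 1 + 1) * (a + 1 - 1) = a * a + 2 * a := by rw [Nat.add_sub_cancel]; ring
    omega
  have h2m : q ^ (2 * m) ≡ 1 [MOD n] := by
    have h1le : 1 ≤ q ^ (2 * m) := Nat.one_le_pow _ _ hq1
    exact ((Nat.modEq_iff_dvd' h1le).mpr (by rw [hfac]; exact hdvd.mul_right _)).symm
  refine ⟨?_, h2m⟩
  refine orderOf_pos_iff.mpr (isOfFinOrder_iff_pow_eq_one.mpr ⟨2 * m, by omega, ?_⟩)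
  have := (ZMod.natCast_eq_natCast_iff (q ^ (2 * m)) 1 n).mpr h2m
  push_cast at this
  exact this

private lemma leader_of_bound {q n m t i : ℕ} (hq : 3 ≤ q) (ht : 2 ≤ t)
    (hm : m = 2 * t + 1) (hn1 : 1 < n) (hdvd : n ∣ q ^ m + 1)
    (hi : 0 < i) (hqi : ¬ q ∣ i) (hB : i * (q ^ t + 1) ≤ n) :
    IsCosetLeader q n i := by
  have hqt1 : 1 ≤ q ^ t := Nat.one_le_pow _ _ (by omega)
  have hexp : i * (q ^ t + 1) = i * q ^ t + i := by ring
  have hiqt : i ≤ i * q ^ t := by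
    calc i = i * 1 := (mul_one i).symm
      _ ≤ i * q ^ t := Nat.mul_le_mul_left i hqt1
  have hin : i < n := by omega
  have hnpos : 0 < n := by omega
  have C1 : ∀ j, j < m → i ≤ i * q ^ j % n ∧ i * q ^ j % n + i ≤ n := by
    intro j hj
    rcases le_or_gt j t with hjt | hjt
    · have hqq : q ^ j ≤ q ^ t := Nat.pow_le_pow_right (by omega) hjt
      have hle : i * q ^ j ≤ i * q ^ t := Nat.mul_le_mul_left i hqq
      have h1 : i * q ^ j + i ≤ n := by omega
      have h2 : i * q ^ j < n := by omega
      rw [Nat.mod_eq_of_lt h2]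
      have h3 : i ≤ i * q ^ j := by
        calc i = i * 1 := (mul_one i).symm
          _ ≤ i * q ^ j := Nat.mul_le_mul_left i (Nat.one_le_pow _ _ (by omega))
      omega
    · set j' := 2 * t + 1 - j with hj'
      have hj'1 : 1 ≤ j' := by omega
      have hj't : j' ≤ t := by omega
      have hjj : j + j' = m := by omega
      set r := i * q ^ j % n with hr
      have hrn : r < n := Nat.mod_lt _ hnpos
      have hcong : i * q ^ m ≡ r * q ^ j' [MOD n] := by
        calc i * q ^ m = i * q ^ j * q ^ j' := by rw [← hjj, pow_add]; ring
          _ ≡ r * q ^ j' [MOD n] := Nat.ModEq.mul_right _ (Nat.mod_modEq _ _).symm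
      have hdvd2 : n ∣ i * q ^ m + i := by
        have h3 : i * q ^ m + i = i * (q ^ m + 1) := by ring
        rw [h3]; exact hdvd.mul_left i
      have hq'le : q ^ j' ≤ q ^ t := Nat.pow_le_pow_right (by omega) hj't
      have hshift : (i - 1) * q ^ t + q ^ t = i * q ^ t := by
        have h4 : (i - 1) * q ^ t + 1 * q ^ t = ((i - 1) + 1) * q ^ t := (add_mul _ _ _).symm
        have h5 : i - 1 + 1 = i := by omega
        rw [h5] at h4
        omega
      have key1 : i ≤ r := by
        by_contra hri
        push_neg at hri
        have h4 : n ∣ r * q ^ j' + i := by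
          have h5 : r * q ^ j' + i ≡ i * q ^ m + i [MOD n] := (hcong.symm).add_right i
          exact Nat.modEq_zero_iff_dvd.mp (h5.trans (Nat.modEq_zero_iff_dvd.mpr hdvd2))
        have hr1 : r * q ^ j' ≤ (i - 1) * q ^ t := Nat.mul_le_mul (by omega) hq'le
        have h6 : r * q ^ j' + i < n := by omega
        have h7 : 0 < r * q ^ j' + i := by omega
        exact absurd (Nat.le_of_dvd h7 h4) (by omega)
      have key2 : r + i ≤ n := by
        by_contra hri
        push_neg at hri
        set s' := n - r with hs'
        have hs'i : s' < i := by omega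
        have hsr : s' + r = n := by omega
        have hA : s' * q ^ j' ≡ i [MOD n] := by
          have h5 : s' * q ^ j' + i * q ^ m ≡ s' * q ^ j' + r * q ^ j' [MOD n] :=
            Nat.ModEq.add_left _ hcong
          have h6 : s' * q ^ j' + r * q ^ j' = n * q ^ j' := by rw [← add_mul, hsr]
          rw [h6] at h5
          have h7 : s' * q ^ j' + i * q ^ m ≡ 0 [MOD n] :=
            h5.trans (Nat.modEq_zero_iff_dvd.mpr ⟨q ^ j', rfl⟩)
          have h8 : i + i * q ^ m ≡ 0 [MOD n] :=
            Nat.modEq_zero_iff_dvd.mpr (by rw [add_comm]; exact hdvd2)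
          exact (h7.trans h8.symm).add_right_cancel' _
        have hs'le : s' * q ^ j' ≤ (i - 1) * q ^ t := Nat.mul_le_mul (by omega) hq'le
        have hlt : s' * q ^ j' < n := by omega
        have heq : s' * q ^ j' = i := by
          have h9 : s' * q ^ j' % n = i % n := hA
          rwa [Nat.mod_eq_of_lt hlt, Nat.mod_eq_of_lt hin] at h9
        apply hqi
        refine ⟨s' * q ^ (j' - 1), ?_⟩
        rw [← heq]
        have h10 : q ^ j' = q * q ^ (j' - 1) := by
          conv_lhs => rw [show j' = 1 + (j' - 1) by omega, pow_add, pow_one]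
        rw [h10]; ring
      exact ⟨key1, key2⟩
  obtain ⟨hordpos, h2m⟩ := ordPos (by omega : 0 < m) hn1 hdvd
  have hm0 : 0 < 2 * m := by omega
  have C2 : ∀ j, i ≤ i * q ^ j % n := by
    intro j
    have hred : i * q ^ j % n = i * q ^ (j % (2 * m)) % n :=
      Nat.ModEq.mul_left i (modeq_pow_reduce h2m j)
    rw [hred]
    set b := j % (2 * m) with hb
    have hblt : b < 2 * m := Nat.mod_lt _ hm0
    rcases lt_or_ge b m with hbm | hbm
    · exact (C1 b hbm).1
    · set c := b - m with hc
      have hcm : c < m := by omega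
      obtain ⟨hc1, hc2⟩ := C1 c hcm
      set r := i * q ^ c % n with hr
      have hrpos : 0 < r := by omega
      have hrn : r < n := Nat.mod_lt _ hnpos
      have hcong : i * q ^ b ≡ r * q ^ m [MOD n] := by
        calc i * q ^ b = i * q ^ c * q ^ m := by rw [show b = c + m by omega, pow_add]; ring
          _ ≡ r * q ^ m [MOD n] := Nat.ModEq.mul_right _ (Nat.mod_modEq _ _).symm
      have h8 : r * q ^ m + r ≡ 0 [MOD n] := Nat.modEq_zero_iff_dvd.mpr (by
        have h9 : r * q ^ m + r = r * (q ^ m + 1) := by ring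
        rw [h9]; exact hdvd.mul_left r)
      have h9 : (n - r) + r ≡ 0 [MOD n] := by
        rw [Nat.sub_add_cancel hrn.le]
        exact Nat.modEq_zero_iff_dvd.mpr dvd_rfl
      have h10 : r * q ^ m ≡ n - r [MOD n] := (h8.trans h9.symm).add_right_cancel' _
      have h11 : i * q ^ b % n = n - r := by
        have h12 : i * q ^ b % n = (n - r) % n := hcong.trans h10
        rw [h12, Nat.mod_eq_of_lt (by omega)]
      omega
  constructor
  · simp only [cycCoset, Finset.mem_image, Finset.mem_range]
    exact ⟨0, hordpos, by simp [Nat.mod_eq_of_lt hin]⟩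
  · intro x hx
    simp only [cycCoset, Finset.mem_image, Finset.mem_range] at hx
    obtain ⟨j, -, rfl⟩ := hx
    exact C2 j

private lemma not_leader_of {q n m t s D : ℕ} (hm : 0 < m) (hn1 : 1 < n)
    (hdvd : n ∣ q ^ m + 1) (hD0 : 0 < D) (hDs : D < s) (hsum : s * q ^ t + D = n) :
    ¬ IsCosetLeader q n s := by
  obtain ⟨hordpos, h2m⟩ := ordPos hm hn1 hdvd
  rintro ⟨-, hmin⟩
  have hq1 : 1 ≤ q := by
    rcases Nat.eq_zero_or_pos q with rfl | h
    · rw [Nat.zero_pow (by omega)] at hdvd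
      exact absurd (Nat.le_of_dvd one_pos hdvd) (by omega)
    · exact h
  have hqt1 : 1 ≤ q ^ t := Nat.one_le_pow _ _ hq1
  have hsqt : s ≤ s * q ^ t := by
    calc s = s * 1 := (mul_one s).symm
      _ ≤ s * q ^ t := Nat.mul_le_mul_left s hqt1
  have hDn : D < n := by omega
  have key : s * q ^ (m + t) ≡ D [MOD n] := by
    have h1 : s * q ^ (m + t) + s * q ^ t ≡ 0 [MOD n] := Nat.modEq_zero_iff_dvd.mpr (by
      have h2 : s * q ^ (m + t) + s * q ^ t = (s * q ^ t) * (q ^ m + 1) := by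
        rw [pow_add]; ring
      rw [h2]; exact hdvd.mul_left _)
    have h3 : D + s * q ^ t ≡ 0 [MOD n] := Nat.modEq_zero_iff_dvd.mpr ⟨1, by omega⟩
    exact (h1.trans h3.symm).add_right_cancel' _
  have hored : q ^ orderOf ((q : ZMod n)) ≡ 1 [MOD n] := by
    refine (ZMod.natCast_eq_natCast_iff _ 1 n).mp ?_
    push_cast
    exact pow_orderOf_eq_one ((q : ZMod n))
  have hmem : D ∈ cycCoset q n s := by
    simp only [cycCoset, Finset.mem_image, Finset.mem_range]
    refine ⟨(m + t) % orderOf ((q : ZMod n)), Nat.mod_lt _ hordpos, ?_⟩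
    have hr : s * q ^ ((m + t) % orderOf ((q : ZMod n))) ≡ D [MOD n] :=
      ((Nat.ModEq.mul_left s (modeq_pow_reduce hored (m + t))).symm).trans key
    calc s * q ^ ((m + t) % orderOf ((q : ZMod n))) % n = D % n := hr
      _ = D := Nat.mod_eq_of_lt hDn
  exact absurd (hmin D hmem) (by omega)

/-- the smallest positive non-coset-leader `i` with `q ∤ i`
modulo `n = (q^m+1)/λ`, `m = 2t+1 ≥ 5`. -/
theorem stmt_9 (q lam t m n : ℕ) (hq : IsPrimePow q) (hodd : Odd q)
    (hlam : 2 ≤ lam) (hlt : lam < q + 1) (hdvd : lam ∣ q + 1)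
    (hm : m = 2 * t + 1) (hm5 : 5 ≤ m) (hn : n = (q ^ m + 1) / lam) :
    (Even t → IsLeast {i : ℕ | 0 < i ∧ ¬ q ∣ i ∧ ¬ IsCosetLeader q n i}
      ((q ^ (t + 1) + 1) / lam - q / lam)) ∧
    (Odd t → IsLeast {i : ℕ | 0 < i ∧ ¬ q ∣ i ∧ ¬ IsCosetLeader q n i}
      ((q ^ (t + 1) - 1) / lam - (q - 2) / lam)) := by
  have hq3 : 3 ≤ q := by
    obtain ⟨k, hk⟩ := hodd
    have := hq.two_le
    omega
  have ht2 : 2 ≤ t := by omega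
  obtain ⟨c, hc⟩ := hdvd
  have hc2 : 2 ≤ c := by
    rcases c with _ | _ | c
    · simp at hc
    · simp at hc; omega
    · omega
  have h2c : 2 * c ≤ q + 1 := by
    calc 2 * c ≤ lam * c := Nat.mul_le_mul_right c hlam
      _ = q + 1 := hc.symm
  have h2lam : 2 * lam ≤ q + 1 := by
    calc 2 * lam = lam * 2 := by ring
      _ ≤ lam * c := Nat.mul_le_mul_left lam hc2
      _ = q + 1 := hc.symm
  have hlamq : lam < q := by omega
  have hcq : c ≤ q := by omega
  have hmodd : Odd m := ⟨t, by omega⟩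
  have hlam_dvd_m : lam ∣ q ^ m + 1 :=
    dvd_trans ⟨c, hc⟩ (by simpa using Odd.nat_add_dvd_pow_add_pow q 1 hmodd)
  have hln : lam * n = q ^ m + 1 := by rw [hn]; exact Nat.mul_div_cancel' hlam_dvd_m
  have hqm : q ≤ q ^ m := Nat.le_self_pow (by omega) q
  have hn1 : 1 < n := by
    rcases Nat.lt_or_ge 1 n with h | h
    · exact h
    · exfalso
      have h2 : lam * n ≤ lam := by
        calc lam * n ≤ lam * 1 := Nat.mul_le_mul_left lam h
          _ = lam := mul_one lam
      omega
  have hndvd : n ∣ q ^ m + 1 := ⟨lam, by rw [← hln]; ring⟩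
  have hqt : q < q ^ t := by
    calc q = q ^ 1 := (pow_one q).symm
      _ < q ^ t := Nat.pow_lt_pow_right (by omega) (by omega)
  have hqt1 : q < q ^ (t + 1) := by
    calc q = q ^ 1 := (pow_one q).symm
      _ < q ^ (t + 1) := Nat.pow_lt_pow_right (by omega) (by omega)
  have hqtpos : 1 ≤ q ^ t := Nat.one_le_pow _ _ (by omega)
  have hq2dvd : q + 1 ∣ q ^ 2 - 1 := by
    refine ⟨q - 1, ?_⟩
    obtain ⟨a, rfl⟩ : ∃ a, q = a + 1 := ⟨q - 1, by omega⟩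
    have e1 : (a + 1) ^ 2 = a * a + 2 * a + 1 := by ring
    have e2 : (a + 1 + 1) * (a + 1 - 1) = a * a + 2 * a := by rw [Nat.add_sub_cancel]; ring
    omega
  -- integer versions of common facts
  have hlam0 : ((lam : ℤ)) ≠ 0 := by exact_mod_cast (by omega : lam ≠ 0)
  have hlamz : (2 : ℤ) ≤ (lam : ℤ) := by exact_mod_cast hlam
  have zc : (lam : ℤ) * c = q + 1 := by exact_mod_cast hc.symm
  have zn : (lam : ℤ) * n = (q : ℤ) ^ m + 1 := by exact_mod_cast hln
  have zqm : ((q : ℤ)) ^ m = (q : ℤ) ^ (2 * t + 1) := by rw [hm]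
  have zqt : ((q : ℤ)) < (q : ℤ) ^ t := by exact_mod_cast hqt
  have zq3 : (3 : ℤ) ≤ (q : ℤ) := by exact_mod_cast hq3
  have zlamq : ((lam : ℤ)) < q := by exact_mod_cast hlamq
  have zcq : ((c : ℤ)) ≤ q := by exact_mod_cast hcq
  constructor
  · -- Even case
    intro hte
    obtain ⟨u, hu⟩ := hte
    have hto : Odd (t + 1) := ⟨u, by omega⟩
    obtain ⟨E, hE⟩ : lam ∣ q ^ (t + 1) + 1 :=
      dvd_trans ⟨c, hc⟩ (by simpa using Odd.nat_add_dvd_pow_add_pow q 1 hto)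
    obtain ⟨F, hF⟩ : lam ∣ q ^ t - 1 := by
      refine dvd_trans ⟨c, hc⟩ (dvd_trans hq2dvd ?_)
      have h1 := Nat.sub_dvd_pow_sub_pow (q ^ 2) 1 u
      rw [one_pow, ← pow_mul] at h1
      rwa [show 2 * u = t by omega] at h1
    have hcE : c < E := by
      have h1 : lam * c < lam * E := by omega
      exact Nat.lt_of_mul_lt_mul_left h1
    have hFle : F + q ^ t < c * q ^ t := by
      refine Nat.lt_of_mul_lt_mul_left (a := lam) ?_
      calc lam * (F + q ^ t) = lam * F + lam * q ^ t := by ring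
        _ = (q ^ t - 1) + lam * q ^ t := by rw [← hF]
        _ < q ^ t + q * q ^ t := by
            have h2 : lam * q ^ t ≤ q * q ^ t := Nat.mul_le_mul_right _ (by omega)
            omega
        _ = (q + 1) * q ^ t := by ring
        _ = lam * c * q ^ t := by rw [hc]
        _ = lam * (c * q ^ t) := by ring
    set i₀ := E + 1 - c with hi₀
    set D := c * q ^ t - (F + q ^ t) with hD
    have hexpr : (q ^ (t + 1) + 1) / lam - q / lam = i₀ := by
      have hEdiv : (q ^ (t + 1) + 1) / lam = E := by
        rw [hE, Nat.mul_div_cancel_left _ (by omega : 0 < lam)]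
      have hqdiv : q / lam = c - 1 := by
        obtain ⟨c', rfl⟩ : ∃ c', c = c' + 1 := ⟨c - 1, by omega⟩
        have h1 : lam * (c' + 1) = c' * lam + lam := by ring
        have h2 : q = (lam - 1) + c' * lam := by omega
        rw [h2, Nat.add_mul_div_right _ _ (by omega : 0 < lam),
          Nat.div_eq_of_lt (by omega)]
        omega
      rw [hEdiv, hqdiv]
      omega
    rw [hexpr]
    -- integer facts
    have zE : (lam : ℤ) * E = (q : ℤ) ^ (t + 1) + 1 := by exact_mod_cast hE.symm
    have zF : (lam : ℤ) * F = (q : ℤ) ^ t - 1 := by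
      have h1 : ((q ^ t - 1 : ℕ) : ℤ) = (q : ℤ) ^ t - 1 := by
        push_cast [Nat.cast_sub hqtpos]; ring
      rw [← h1]; exact_mod_cast hF.symm
    have zi : ((i₀ : ℕ) : ℤ) = (E : ℤ) + 1 - c := by
      rw [hi₀, Nat.cast_sub (by omega : c ≤ E + 1)]; push_cast; ring
    have zD : ((D : ℕ) : ℤ) = (c : ℤ) * q ^ t - F - q ^ t := by
      rw [hD, Nat.cast_sub hFle.le]; push_cast; ring
    have hsum : i₀ * q ^ t + D = n := by
      have hz : (lam : ℤ) * (((i₀ : ℕ) : ℤ) * q ^ t + D) = (lam : ℤ) * n := by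
        rw [zi, zD]
        linear_combination (q : ℤ) ^ t * zE - zF - zn - zqm
      have hz2 : ((i₀ : ℕ) : ℤ) * q ^ t + D = n := mul_left_cancel₀ hlam0 hz
      exact_mod_cast hz2
    have hzD : (lam : ℤ) * D = ((q : ℤ) - lam) * q ^ t + 1 := by
      rw [zD]; linear_combination (q : ℤ) ^ t * zc - zF
    have hDpos : 0 < D := by
      rcases Nat.eq_zero_or_pos D with h | h
      · exfalso
        rw [h] at hzD
        norm_num at hzD
        have hql : (0 : ℤ) < (q : ℤ) - lam := by linarith
        have hqt0 : (1 : ℤ) ≤ (q : ℤ) ^ t := by exact_mod_cast hqtpos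
        linarith [mul_pos hql (lt_of_lt_of_le zero_lt_one hqt0)]
      · exact h
    have hzDi : (lam : ℤ) * i₀ = (lam : ℤ) * D + (lam : ℤ) * ((q : ℤ) ^ t + 1 - c) := by
      rw [zi, zD]; linear_combination zE + zF - (q : ℤ) ^ t * zc
    have hDi : D < i₀ := by
      have h1 : ((D : ℕ) : ℤ) < ((i₀ : ℕ) : ℤ) := by
        by_contra hcon
        push_neg at hcon
        have h2 : (lam : ℤ) * i₀ ≤ lam * D :=
          mul_le_mul_of_nonneg_left hcon (by positivity)
        have h3 : (1 : ℤ) ≤ (q : ℤ) ^ t + 1 - c := by linarith [zqt, zcq]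
        linarith [mul_le_mul_of_nonneg_left h3 (by positivity : (0 : ℤ) ≤ (lam : ℤ))]
      exact_mod_cast h1
    have hub : ∀ i : ℕ, i < i₀ → i * (q ^ t + 1) ≤ n := by
      intro i hi
      have hzub : (lam : ℤ) * ((((i₀ : ℕ) : ℤ) - 1) * ((q : ℤ) ^ t + 1) + c) = lam * n := by
        rw [zi]
        linear_combination ((q : ℤ) ^ t + 1) * zE - ((q : ℤ) ^ t + 1) * zc + zc - zn - zqm
      have hub1 : (((i₀ : ℕ) : ℤ) - 1) * ((q : ℤ) ^ t + 1) + c = n := mul_left_cancel₀ hlam0 hzub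
      have hii : ((i : ℕ) : ℤ) ≤ ((i₀ : ℕ) : ℤ) - 1 := by
        have : (i : ℤ) < (i₀ : ℤ) := by exact_mod_cast hi
        omega
      have h2 : ((i : ℕ) : ℤ) * ((q : ℤ) ^ t + 1) ≤ (n : ℤ) := by
        calc ((i : ℕ) : ℤ) * ((q : ℤ) ^ t + 1)
            ≤ (((i₀ : ℕ) : ℤ) - 1) * ((q : ℤ) ^ t + 1) := by
              refine mul_le_mul_of_nonneg_right hii (by positivity)
          _ ≤ (n : ℤ) := by
              have h9 : (0 : ℤ) ≤ (c : ℤ) := by positivity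
              linarith [hub1]
      exact_mod_cast h2
    have hqndvd : ¬ q ∣ i₀ := by
      rintro ⟨k, hk⟩
      have zk : ((i₀ : ℕ) : ℤ) = (q : ℤ) * k := by exact_mod_cast hk
      have zi0lam : (lam : ℤ) * i₀ = (q : ℤ) ^ (t + 1) - q + lam := by
        rw [zi]; linear_combination zE - zc
      have hdq : ((lam : ℤ)) = (q : ℤ) * ((lam : ℤ) * k - (q : ℤ) ^ t + 1) := by
        linear_combination (-1 : ℤ) * zi0lam + (lam : ℤ) * zk
      have hdq2 : (q : ℤ) ∣ (lam : ℤ) := ⟨_, hdq⟩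
      have hdq3 : q ∣ lam := by exact_mod_cast hdq2
      exact absurd (Nat.le_of_dvd (by omega) hdq3) (by omega)
    have hpos : 0 < i₀ := by omega
    refine ⟨⟨hpos, hqndvd, not_leader_of (by omega : 0 < m) hn1 hndvd hDpos hDi hsum⟩, ?_⟩
    rintro i ⟨hi0, hiq, hil⟩
    by_contra hcon
    push_neg at hcon
    exact hil (leader_of_bound hq3 ht2 hm hn1 hndvd hi0 hiq (hub i hcon))
  · -- Odd case
    intro hto
    obtain ⟨u, hu⟩ := hto
    have hte1 : t + 1 = 2 * (u + 1) := by omega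
    obtain ⟨E, hE⟩ : lam ∣ q ^ (t + 1) - 1 := by
      refine dvd_trans ⟨c, hc⟩ (dvd_trans hq2dvd ?_)
      have h1 := Nat.sub_dvd_pow_sub_pow (q ^ 2) 1 (u + 1)
      rw [one_pow, ← pow_mul] at h1
      rwa [← hte1] at h1
    obtain ⟨G, hG⟩ : lam ∣ q ^ t + 1 :=
      dvd_trans ⟨c, hc⟩ (by simpa using Odd.nat_add_dvd_pow_add_pow q 1 ⟨u, hu⟩)
    set ν := (q - 2) / lam with hν
    set ρ := (q - 2) % lam with hρ
    have hνρ : lam * ν + ρ = q - 2 := Nat.div_add_mod (q - 2) lam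
    have hρlt : ρ < lam := Nat.mod_lt _ (by omega)
    have hqt1pos : 1 ≤ q ^ (t + 1) := Nat.one_le_pow _ _ (by omega)
    have hνE : ν < E := by
      refine Nat.lt_of_mul_lt_mul_left (a := lam) ?_
      omega
    set i₀ := E - ν with hi₀
    have hexpr : (q ^ (t + 1) - 1) / lam - ν = i₀ := by
      have hEdiv : (q ^ (t + 1) - 1) / lam = E := by
        rw [hE, Nat.mul_div_cancel_left _ (by omega : 0 < lam)]
      rw [hEdiv]
    rw [hexpr]
    set D := G + ν * q ^ t with hD
    -- integer facts
    have zE : (lam : ℤ) * E = (q : ℤ) ^ (t + 1) - 1 := by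
      have h1 : ((q ^ (t + 1) - 1 : ℕ) : ℤ) = (q : ℤ) ^ (t + 1) - 1 := by
        push_cast [Nat.cast_sub hqt1pos]; ring
      rw [← h1]; exact_mod_cast hE.symm
    have zG : (lam : ℤ) * G = (q : ℤ) ^ t + 1 := by exact_mod_cast hG.symm
    have zν : (lam : ℤ) * ν = (q : ℤ) - 2 - ρ := by
      have h1 : ((lam * ν + ρ : ℕ) : ℤ) = ((q - 2 : ℕ) : ℤ) := Nat.cast_inj.mpr hνρ
      rw [Nat.cast_sub (by omega : 2 ≤ q)] at h1
      push_cast at h1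
      linarith
    have zρ : (0 : ℤ) ≤ (ρ : ℤ) := by positivity
    have zρlt : ((ρ : ℤ)) < lam := by exact_mod_cast hρlt
    have zi : ((i₀ : ℕ) : ℤ) = (E : ℤ) - ν := by
      rw [hi₀, Nat.cast_sub hνE.le]
    have zD : ((D : ℕ) : ℤ) = (G : ℤ) + (ν : ℤ) * q ^ t := by rw [hD]; push_cast; ring
    have hsum : i₀ * q ^ t + D = n := by
      have hz : (lam : ℤ) * (((i₀ : ℕ) : ℤ) * q ^ t + D) = (lam : ℤ) * n := by
        rw [zi, zD]
        linear_combination (q : ℤ) ^ t * zE + zG - zn - zqm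
      have hz2 : ((i₀ : ℕ) : ℤ) * q ^ t + D = n := mul_left_cancel₀ hlam0 hz
      exact_mod_cast hz2
    have hGpos : 0 < G := by
      rcases Nat.eq_zero_or_pos G with h | h
      · exfalso; rw [h, Nat.mul_zero] at hG; omega
      · exact h
    have hDpos : 0 < D := by rw [hD]; omega
    have hzDi : (lam : ℤ) * i₀ = (lam : ℤ) * D + ((q : ℤ) ^ t - q) + (ρ : ℤ) * ((q : ℤ) ^ t + 1) := by
      rw [zi, zD]
      linear_combination zE - zG - ((q : ℤ) ^ t + 1) * zν
    have hDi : D < i₀ := by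
      have h1 : ((D : ℕ) : ℤ) < ((i₀ : ℕ) : ℤ) := by
        by_contra hcon
        push_neg at hcon
        have h2 : (lam : ℤ) * i₀ ≤ lam * D :=
          mul_le_mul_of_nonneg_left hcon (by positivity)
        have h3 : (0 : ℤ) ≤ (ρ : ℤ) * ((q : ℤ) ^ t + 1) := by positivity
        linarith [zqt]
      exact_mod_cast h1
    have hub : ∀ i : ℕ, i < i₀ → i * (q ^ t + 1) ≤ n := by
      intro i hi
      have hzub : (lam : ℤ) * ((((i₀ : ℕ) : ℤ) - 1) * ((q : ℤ) ^ t + 1)) =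
          (lam : ℤ) * n - ((q : ℤ) + 1) - ((lam : ℤ) - 1 - ρ) * ((q : ℤ) ^ t + 1) := by
        rw [zi]
        linear_combination ((q : ℤ) ^ t + 1) * zE - ((q : ℤ) ^ t + 1) * zν - zn - zqm
      have hY : (0 : ℤ) ≤ ((lam : ℤ) - 1 - ρ) * ((q : ℤ) ^ t + 1) := by
        have h0 : (0 : ℤ) ≤ (lam : ℤ) - 1 - ρ := by omega
        exact mul_nonneg h0 (by positivity)
      have hub1 : (((i₀ : ℕ) : ℤ) - 1) * ((q : ℤ) ^ t + 1) ≤ n := by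
        have h2 : (lam : ℤ) * ((((i₀ : ℕ) : ℤ) - 1) * ((q : ℤ) ^ t + 1)) ≤ lam * n := by
          have h8 : (0 : ℤ) ≤ (q : ℤ) + 1 := by positivity
          linarith [hzub, hY]
        exact le_of_mul_le_mul_left h2 (by exact_mod_cast (by omega : 0 < lam))
      have hii : ((i : ℕ) : ℤ) ≤ ((i₀ : ℕ) : ℤ) - 1 := by
        have : (i : ℤ) < (i₀ : ℤ) := by exact_mod_cast hi
        omega
      have h2 : ((i : ℕ) : ℤ) * ((q : ℤ) ^ t + 1) ≤ (n : ℤ) := by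
        calc ((i : ℕ) : ℤ) * ((q : ℤ) ^ t + 1)
            ≤ (((i₀ : ℕ) : ℤ) - 1) * ((q : ℤ) ^ t + 1) :=
              mul_le_mul_of_nonneg_right hii (by positivity)
          _ ≤ (n : ℤ) := hub1
      exact_mod_cast h2
    have hqndvd : ¬ q ∣ i₀ := by
      rintro ⟨k, hk⟩
      have zk : ((i₀ : ℕ) : ℤ) = (q : ℤ) * k := by exact_mod_cast hk
      have zi0lam : (lam : ℤ) * i₀ = (q : ℤ) ^ (t + 1) - q + 1 + ρ := by
        rw [zi]; linear_combination zE - zν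
      have hdq : ((1 : ℤ) + ρ) = (q : ℤ) * ((lam : ℤ) * k - (q : ℤ) ^ t + 1) := by
        linear_combination (-1 : ℤ) * zi0lam + (lam : ℤ) * zk
      have hdq2 : (q : ℤ) ∣ ((1 + ρ : ℕ) : ℤ) := by
        push_cast
        exact ⟨_, hdq⟩
      have hdq3 : q ∣ (1 + ρ) := by exact_mod_cast hdq2
      exact absurd (Nat.le_of_dvd (by omega) hdq3) (by omega)
    have hpos : 0 < i₀ := by omega
    refine ⟨⟨hpos, hqndvd, not_leader_of (by omega : 0 < m) hn1 hndvd hDpos hDi hsum⟩, ?_⟩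
    rintro i ⟨hi0, hiq, hil⟩
    by_contra hcon
    push_neg at hcon
    exact hil (leader_of_bound hq3 ht2 hm hn1 hndvd hi0 hiq (hub i hcon))
end

section
/- Let q be an odd prime power and n = (q^3+1)/2. Let δ be an integer with 1 ≤ δ-1 ≤ (q^2-1)/2 and set ε = ⌈(δ-1)(1-q^{-1})⌉. Then the union C_1 ∪ ... ∪ C_{δ-1} of q-cyclotomic cosets modulo n has cardinality n - k (equivalently, the BCH code C_{(n,q,δ,1)} has dimension k and C_{(n,q,δ+1,0)} has dimension k-1), where k = n - 6ε if 2 ≤ δ ≤ (q^2-1)/2 - (q-3)/2, and k = n - 6ε + 6(δ - (q^2-1)/2 + ⌊(q-2)/2⌋) if (q^2-1)/2 - (q-3)/2 < δ ≤ (q^2-1)/2 + 1. -/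
set_option maxHeartbeats 1000000


namespace Stmt12Aux

lemma int_zero_of (N a : ℤ) (hd : N ∣ a) (h1 : -N < a) (h2 : a < N) : a = 0 :=
  Int.eq_zero_of_abs_lt_dvd hd (abs_lt.2 ⟨h1, h2⟩)

lemma int_eq_of (N a : ℤ) (hd : N ∣ a) (h1 : 0 < a) (h2 : a < 2 * N) : a = N := by
  have hd' : N ∣ a - N := dvd_sub hd dvd_rfl
  have hN : 0 < N := by
    rcases lt_trichotomy N 0 with h | h | h
    · linarith
    · simp [h] at hd; omega
    · exact h
  have := int_zero_of N (a - N) hd' (by linarith) (by linarith)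
  linarith

variable {q n r : ℕ}

lemma q3z (h2n : 2 * n = q ^ 3 + 1) : ((q : ZMod n)) ^ 3 = -1 := by
  have h0 : ((q ^ 3 + 1 : ℕ) : ZMod n) = 0 := by
    rw [← h2n]; push_cast; simp [ZMod.natCast_self]
  push_cast at h0
  linear_combination h0

lemma q6z (h2n : 2 * n = q ^ 3 + 1) : ((q : ZMod n)) ^ 6 = 1 := by
  have h3 := q3z (n := n) h2n
  calc ((q : ZMod n)) ^ 6 = (((q : ZMod n)) ^ 3) ^ 2 := by ring
  _ = 1 := by rw [h3]; ring

lemma pow_mod6 (h2n : 2 * n = q ^ 3 + 1) (e : ℕ) :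
    ((q : ZMod n)) ^ e = ((q : ZMod n)) ^ (e % 6) := by
  conv_lhs => rw [← Nat.div_add_mod e 6]
  rw [pow_add, pow_mul, q6z h2n, one_pow, one_mul]

lemma natval (_hn : 0 < n) {x y : ℕ} (hx : x < n) (hy : y < n)
    (h : (x : ZMod n) = y) : x = y := by
  have h1 := ZMod.val_cast_of_lt hx
  have h2 := ZMod.val_cast_of_lt hy
  rw [h] at h1; rw [h2] at h1; exact h1.symm

end Stmt12Aux

namespace Stmt12Aux

variable {q n r : ℕ}

lemma nbig (hr : 1 ≤ r) (hq : q = 2 * r + 1) (hn_expr : n = 4*r^3 + 6*r^2 + 3*r + 1) :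
    14 ≤ n := by subst hn_expr; nlinarith

lemma ord_eq (hr : 1 ≤ r) (hq : q = 2 * r + 1)
    (hn_expr : n = 4*r^3 + 6*r^2 + 3*r + 1) (h2n : 2 * n = q ^ 3 + 1) :
    orderOf (q : ZMod n) = 6 := by
  have hn14 : 14 ≤ n := nbig hr hq hn_expr
  have hq3 : 3 ≤ q := by omega
  have hnpos : 0 < n := by omega
  have h3 : ((q : ZMod n)) ^ 3 = -1 := q3z h2n
  have h6 : ((q : ZMod n)) ^ 6 = 1 := q6z h2n
  have hdvd : orderOf (q : ZMod n) ∣ 6 := orderOf_dvd_of_pow_eq_one h6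
  have hfin : IsOfFinOrder (q : ZMod n) :=
    isOfFinOrder_iff_pow_eq_one.2 ⟨6, by norm_num, h6⟩
  have hpos : 0 < orderOf (q : ZMod n) := orderOf_pos_iff.2 hfin
  have hle : orderOf (q : ZMod n) ≤ 6 := Nat.le_of_dvd (by norm_num) hdvd
  have hpow := pow_orderOf_eq_one (q : ZMod n)
  -- exclude small orders
  have hq1 : ((q : ZMod n)) ^ 1 ≠ 1 := by
    intro h
    have : ((q : ℕ) : ZMod n) = ((1 : ℕ) : ZMod n) := by push_cast; simpa using h
    have := natval hnpos (by nlinarith) (by omega) this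
    omega
  have hq2 : ((q : ZMod n)) ^ 2 ≠ 1 := by
    intro h
    have hc : ((q ^ 2 : ℕ) : ZMod n) = ((1 : ℕ) : ZMod n) := by push_cast; simpa using h
    have hlt : q ^ 2 < n := by nlinarith
    have := natval hnpos hlt (by omega) hc
    nlinarith
  have hq3' : ((q : ZMod n)) ^ 3 ≠ 1 := by
    intro h
    rw [h3] at h
    have hc : ((2 : ℕ) : ZMod n) = ((0 : ℕ) : ZMod n) := by
      push_cast
      linear_combination -h
    have := natval hnpos (by omega) (by omega) hc
    omega
  interval_cases h : orderOf (q : ZMod n) <;> simp_all <;> omega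


end Stmt12Aux

namespace Stmt12Aux

variable {q n r : ℕ}

lemma mem_iff (hord : orderOf (q : ZMod n) = 6) {s x : ℕ} :
    x ∈ cycCoset q n s ↔ ∃ j < 6, x = s * q ^ j % n := by
  simp only [cycCoset, hord, Finset.mem_image, Finset.mem_range]
  constructor
  · rintro ⟨j, hj, rfl⟩; exact ⟨j, hj, rfl⟩
  · rintro ⟨j, hj, rfl⟩; exact ⟨j, hj, rfl⟩

lemma castmod (hn : 0 < n) (a : ℕ) : ((a % n : ℕ) : ZMod n) = a :=
  ZMod.natCast_mod a n

lemma coset_subset (hr : 1 ≤ r) (hq : q = 2 * r + 1)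
    (hn_expr : n = 4*r^3 + 6*r^2 + 3*r + 1) (h2n : 2 * n = q ^ 3 + 1)
    {s t k : ℕ} (h : (s : ZMod n) = (t : ZMod n) * (q : ZMod n) ^ k) :
    cycCoset q n s ⊆ cycCoset q n t := by
  have hord := ord_eq hr hq hn_expr h2n
  have hnpos : 0 < n := by have := nbig hr hq hn_expr; omega
  intro x hx
  rw [mem_iff hord] at hx ⊢
  obtain ⟨j, hj, rfl⟩ := hx
  refine ⟨(k + j) % 6, Nat.mod_lt _ (by norm_num), ?_⟩
  apply natval hnpos (Nat.mod_lt _ hnpos) (Nat.mod_lt _ hnpos)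
  rw [castmod hnpos, castmod hnpos]
  push_cast
  rw [h, mul_assoc, ← pow_add, pow_mod6 h2n]

lemma key (hr : 1 ≤ r) (hq : q = 2 * r + 1)
    (hn_expr : n = 4*r^3 + 6*r^2 + 3*r + 1) (h2n : 2 * n = q ^ 3 + 1)
    {s t k : ℕ} (hs1 : 1 ≤ s) (hs2 : 2 * s < q ^ 2) (hsd : ¬ q ∣ s)
    (ht1 : 1 ≤ t) (ht2 : 2 * t < q ^ 2) (htd : ¬ q ∣ t)
    (hk : k < 6) (h : (t : ZMod n) = (s : ZMod n) * (q : ZMod n) ^ k) :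
    (k = 0 ∧ s = t) ∨ (k = 4 ∧ s * q + t = n) ∨ (k = 2 ∧ t * q + s = n) := by
  have hnpos : 0 < n := by have := nbig hr hq hn_expr; omega
  have hc : ((t : ℕ) : ZMod n) = ((s * q ^ k : ℕ) : ZMod n) := by push_cast; rw [h]
  have hmod : (n : ℤ) ∣ (s * q ^ k : ℤ) - t := by
    have := (ZMod.natCast_eq_natCast_iff _ _ _).1 hc
    have := (Nat.modEq_iff_dvd).1 this
    push_cast at this ⊢
    exact this
  -- integer facts
  have hq3 : (3 : ℤ) ≤ (q : ℤ) := by exact_mod_cast (by omega : 3 ≤ q)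
  have h2nZ : 2 * (n : ℤ) = (q : ℤ) ^ 3 + 1 := by exact_mod_cast h2n
  have hs1Z : (1 : ℤ) ≤ (s : ℤ) := by exact_mod_cast hs1
  have ht1Z : (1 : ℤ) ≤ (t : ℤ) := by exact_mod_cast ht1
  have hs2Z : 2 * (s : ℤ) < (q : ℤ) ^ 2 := by exact_mod_cast hs2
  have ht2Z : 2 * (t : ℤ) < (q : ℤ) ^ 2 := by exact_mod_cast ht2
  have hQ32 : 3 * (q : ℤ) ^ 2 ≤ (q : ℤ) ^ 3 := by nlinarith
  have hSN : (s : ℤ) < (n : ℤ) := by nlinarith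
  have hTN : (t : ℤ) < (n : ℤ) := by nlinarith
  have hSQ : 2 * ((s : ℤ) * q) < (q : ℤ) ^ 3 := by nlinarith
  have hTQ : 2 * ((t : ℤ) * q) < (q : ℤ) ^ 3 := by nlinarith
  have hSQN : (s : ℤ) * q < (n : ℤ) := by nlinarith
  have hTQN : (t : ℤ) * q < (n : ℤ) := by nlinarith
  interval_cases k
  · -- k = 0
    left
    refine ⟨rfl, ?_⟩
    have h0 : (s : ℤ) * q ^ 0 - t = 0 := by
      apply int_zero_of (n : ℤ) _ hmod <;> push_cast <;> nlinarith
    have : (s : ℤ) = (t : ℤ) := by push_cast at h0; linarith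
    exact_mod_cast this
  · -- k = 1 : impossible
    exfalso
    have h0 : (s : ℤ) * q ^ 1 - t = 0 := by
      apply int_zero_of (n : ℤ) _ hmod <;> push_cast <;> nlinarith
    have : s * q = t := by exact_mod_cast (by linarith : (s : ℤ) * q = t)
    exact htd ⟨s, by linarith [mul_comm s q, this]⟩
  · -- k = 2
    right; right
    refine ⟨rfl, ?_⟩
    obtain ⟨c, hcc⟩ := hmod
    have hmod2 : (n : ℤ) ∣ (t : ℤ) * q + s := by
      refine ⟨2 * s - c * q, ?_⟩
      linear_combination (-(q : ℤ)) * hcc + (-(s : ℤ)) * h2nZ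
    have h0 : (t : ℤ) * q + s = n := by
      apply int_eq_of _ _ hmod2 (by nlinarith) (by nlinarith)
    exact_mod_cast h0
  · -- k = 3 : impossible
    exfalso
    obtain ⟨c, hcc⟩ := hmod
    have hmod2 : (n : ℤ) ∣ (t : ℤ) + s := by
      refine ⟨2 * s - c, ?_⟩
      linear_combination (-1 : ℤ) * hcc + (-(s : ℤ)) * h2nZ
    have h0 : (t : ℤ) + s = 0 := by
      apply int_zero_of _ _ hmod2 (by nlinarith) (by nlinarith)
    nlinarith
  · -- k = 4
    right; left
    refine ⟨rfl, ?_⟩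
    obtain ⟨c, hcc⟩ := hmod
    have hmod2 : (n : ℤ) ∣ (s : ℤ) * q + t := by
      refine ⟨2 * s * q - c, ?_⟩
      linear_combination (-1 : ℤ) * hcc + (-((s : ℤ) * (q : ℤ))) * h2nZ
    have h0 : (s : ℤ) * q + t = n := by
      apply int_eq_of _ _ hmod2 (by nlinarith) (by nlinarith)
    exact_mod_cast h0
  · -- k = 5 : impossible
    exfalso
    obtain ⟨c, hcc⟩ := hmod
    have hmod2 : (n : ℤ) ∣ (t : ℤ) * q - s := by
      refine ⟨4 * s * n - 4 * s - c * q, ?_⟩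
      linear_combination (-(q : ℤ)) * hcc + (-((s : ℤ) * (2 * (n : ℤ) + (q : ℤ) ^ 3 - 1))) * h2nZ
    have h0 : (t : ℤ) * q - s = 0 := by
      apply int_zero_of _ _ hmod2 (by nlinarith) (by nlinarith)
    have : t * q = s := by exact_mod_cast (by linarith : (t : ℤ) * q = s)
    exact hsd ⟨t, by linarith [mul_comm t q, this]⟩

end Stmt12Aux

namespace Stmt12Aux

variable {q n r : ℕ}

lemma no_sq1 (hr : 1 ≤ r) (hq : q = 2 * r + 1)
    (hn_expr : n = 4*r^3 + 6*r^2 + 3*r + 1) {s : ℕ} (h : s * q + s = n) : False := by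
  have h' : (s : ℤ) * q + s = n := by exact_mod_cast h
  have h2 : 2 * (s : ℤ) * ((r : ℤ) + 1) = (4 * (r : ℤ) ^ 2 + 2 * r + 1) * ((r : ℤ) + 1) := by
    have hqZ : (q : ℤ) = 2 * (r : ℤ) + 1 := by exact_mod_cast hq
    have hnZ : (n : ℤ) = 4 * (r : ℤ) ^ 3 + 6 * (r : ℤ) ^ 2 + 3 * r + 1 := by exact_mod_cast hn_expr
    rw [hqZ, hnZ] at h'
    ring_nf
    ring_nf at h'
    linarith
  have h3 : 2 * (s : ℤ) = 4 * (r : ℤ) ^ 2 + 2 * r + 1 :=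
    mul_right_cancel₀ (by positivity) h2
  have : (2 : ℤ) ∣ 4 * (r : ℤ) ^ 2 + 2 * r + 1 - (4 * (r : ℤ) ^ 2 + 2 * r) := by
    have d1 : (2 : ℤ) ∣ 2 * (s : ℤ) := ⟨s, by ring⟩
    have d2 : (2 : ℤ) ∣ 4 * (r : ℤ) ^ 2 + 2 * r := ⟨2 * (r : ℤ) ^ 2 + r, by ring⟩
    rw [← h3] at *
    exact dvd_sub d1 d2
  simp at this

lemma card6 (hr : 1 ≤ r) (hq : q = 2 * r + 1)
    (hn_expr : n = 4*r^3 + 6*r^2 + 3*r + 1) (h2n : 2 * n = q ^ 3 + 1)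
    {s : ℕ} (hs1 : 1 ≤ s) (hs2 : 2 * s < q ^ 2) (hsd : ¬ q ∣ s) :
    (cycCoset q n s).card = 6 := by
  have hord := ord_eq hr hq hn_expr h2n
  have hnpos : 0 < n := by have := nbig hr hq hn_expr; omega
  rw [cycCoset, hord, Finset.card_image_of_injOn, Finset.card_range]
  have main : ∀ i j : ℕ, i < j → j < 6 → s * q ^ i % n = s * q ^ j % n → False := by
    intro i j hij hj6 heq
    have hz : (s : ZMod n) * (q : ZMod n) ^ i = (s : ZMod n) * (q : ZMod n) ^ j := by
      have := congrArg (fun a : ℕ => (a : ZMod n)) heq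
      simpa [castmod hnpos, Nat.cast_mul, Nat.cast_pow] using this
    have hz2 : (s : ZMod n) = (s : ZMod n) * (q : ZMod n) ^ (j - i) := by
      have h5 : (s : ZMod n) * (q : ZMod n) ^ i * (q : ZMod n) ^ (6 - i)
          = (s : ZMod n) * (q : ZMod n) ^ j * (q : ZMod n) ^ (6 - i) := by rw [hz]
      rw [mul_assoc, mul_assoc, ← pow_add, ← pow_add] at h5
      rw [show i + (6 - i) = 6 by omega, show j + (6 - i) = (j - i) + 6 by omega] at h5
      rw [pow_add, q6z h2n, mul_one, ← mul_assoc, mul_one] at h5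
      simpa [q6z h2n] using h5
    have := key hr hq hn_expr h2n hs1 hs2 hsd hs1 hs2 hsd
      (show j - i < 6 by omega) hz2
    rcases this with ⟨h0, -⟩ | ⟨-, hn'⟩ | ⟨-, hn'⟩
    · omega
    · exact no_sq1 hr hq hn_expr hn'
    · exact no_sq1 hr hq hn_expr hn'
  intro i hi j hj heq
  simp only [Finset.coe_range, Set.mem_Iio] at hi hj
  rcases lt_trichotomy i j with h | h | h
  · exact absurd (main i j h hj heq) (by simp)
  · exact h
  · exact absurd (main j i h hi heq.symm) (by simp)

lemma coset_disj (hr : 1 ≤ r) (hq : q = 2 * r + 1)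
    (hn_expr : n = 4*r^3 + 6*r^2 + 3*r + 1) (h2n : 2 * n = q ^ 3 + 1)
    {δ' : ℕ} (hδ' : δ' ≤ 2*r^2 + 2*r)
    {s t : ℕ} (hs1 : 1 ≤ s) (hs2 : s ≤ δ') (hsd : ¬ q ∣ s) (hsD : s * q + δ' < n)
    (ht1 : 1 ≤ t) (ht2 : t ≤ δ') (htd : ¬ q ∣ t) (htD : t * q + δ' < n)
    (hst : s ≠ t) :
    Disjoint (cycCoset q n s) (cycCoset q n t) := by
  have hord := ord_eq hr hq hn_expr h2n
  have hnpos : 0 < n := by have := nbig hr hq hn_expr; omega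
  have hq2 : q ^ 2 = 4*r^2 + 4*r + 1 := by rw [hq]; ring
  have hs2' : 2 * s < q ^ 2 := by rw [hq2]; omega
  have ht2' : 2 * t < q ^ 2 := by rw [hq2]; omega
  rw [Finset.disjoint_left]
  intro x hxs hxt
  rw [mem_iff hord] at hxs hxt
  obtain ⟨i, hi, rfl⟩ := hxs
  obtain ⟨j, hj, hx⟩ := hxt
  have hz : (s : ZMod n) * (q : ZMod n) ^ i = (t : ZMod n) * (q : ZMod n) ^ j := by
    have := congrArg (fun a : ℕ => (a : ZMod n)) hx
    simpa [castmod hnpos, Nat.cast_mul, Nat.cast_pow] using this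
  have hz2 : (t : ZMod n) = (s : ZMod n) * (q : ZMod n) ^ ((i + (6 - j)) % 6) := by
    have h5 : (t : ZMod n) * (q : ZMod n) ^ j * (q : ZMod n) ^ (6 - j)
        = (s : ZMod n) * (q : ZMod n) ^ i * (q : ZMod n) ^ (6 - j) := by rw [hz]
    rw [mul_assoc, mul_assoc, ← pow_add, ← pow_add] at h5
    rw [show j + (6 - j) = 6 by omega] at h5
    rw [q6z h2n, mul_one, pow_mod6 h2n] at h5
    exact h5
  have := key hr hq hn_expr h2n hs1 hs2' hsd ht1 ht2' htd
    (Nat.mod_lt _ (by norm_num)) hz2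
  rcases this with ⟨-, h0⟩ | ⟨-, hn'⟩ | ⟨-, hn'⟩
  · exact hst h0
  · omega
  · omega

end Stmt12Aux

namespace Stmt12Aux

variable {q n r : ℕ}

lemma q_not_dvd_n (hr : 1 ≤ r) (hq : q = 2 * r + 1) (h2n : 2 * n = q ^ 3 + 1) :
    ¬ q ∣ n := by
  intro hqn
  have h1 : q ∣ q ^ 3 := dvd_pow_self q (by norm_num)
  have h2 : q ∣ 2 * n := Dvd.dvd.mul_left hqn 2
  rw [h2n] at h2
  have h3 : q ∣ 1 := by
    have := Nat.dvd_sub h2 h1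
    simpa using this
  have := Nat.le_of_dvd (by norm_num) h3
  omega

lemma cover (hr : 1 ≤ r) (hq : q = 2 * r + 1)
    (hn_expr : n = 4*r^3 + 6*r^2 + 3*r + 1) (h2n : 2 * n = q ^ 3 + 1)
    {δ' : ℕ} (hδ' : δ' ≤ 2*r^2 + 2*r) :
    ∀ s ∈ Finset.Icc 1 δ',
      ∃ t ∈ (Finset.Icc 1 δ').filter (fun u => ¬ q ∣ u ∧ u * q + δ' < n),
        cycCoset q n s ⊆ cycCoset q n t := by
  intro s
  induction s using Nat.strong_induction_on with
  | _ s ih =>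
    intro hs
    rw [Finset.mem_Icc] at hs
    by_cases hdvd : q ∣ s
    · obtain ⟨c, rfl⟩ := hdvd
      have hc1 : 1 ≤ c := by
        rcases Nat.eq_zero_or_pos c with h | h
        · subst h; simp at hs
        · exact h
      have hlt : c < q * c := by
        have : 1 * c < q * c := (Nat.mul_lt_mul_right hc1).mpr (by omega)
        simpa using this
      have hsub : cycCoset q n (q * c) ⊆ cycCoset q n c := by
        apply coset_subset hr hq hn_expr h2n (k := 1)
        push_cast; ring
      obtain ⟨t, ht, hsub2⟩ := ih c hlt (Finset.mem_Icc.2 ⟨hc1, le_trans (le_of_lt hlt) hs.2⟩)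
      exact ⟨t, ht, subset_trans hsub hsub2⟩
    · by_cases hD : s * q + δ' < n
      · exact ⟨s, by simp [Finset.mem_filter, Finset.mem_Icc, hs.1, hs.2, hdvd, hD], subset_rfl⟩
      · push_neg at hD
        have hδs : s ≤ 2*r^2 + 2*r := le_trans hs.2 hδ'
        have hsqb : s * q ≤ (2*r^2 + 2*r) * q := Nat.mul_le_mul_right q hδs
        have hc1 : (2*r^2 + 2*r) * q = 4*r^3 + 6*r^2 + 2*r := by rw [hq]; ring
        have hsq_lt : s * q < n := by rw [hc1] at hsqb; omega
        -- lower bound on s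
        have hslb : 2*r^2 + r + 1 ≤ s := by
          by_contra hcon
          push_neg at hcon
          have h4 : s * q ≤ (2*r^2 + r) * q := Nat.mul_le_mul_right q (by omega)
          have h5 : (2*r^2 + r) * q = 4*r^3 + 4*r^2 + r := by rw [hq]; ring
          omega
        have hsq_lb : (2*r^2 + r + 1) * q ≤ s * q := Nat.mul_le_mul_right q hslb
        have hc2 : (2*r^2 + r + 1) * q = 4*r^3 + 4*r^2 + 3*r + 1 := by rw [hq]; ring
        set t := n - s * q with htdef
        have htsq : t + s * q = n := Nat.sub_add_cancel (le_of_lt hsq_lt)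
        have htub : t ≤ 2*r^2 := by omega
        have ht1 : 1 ≤ t := by
          rcases Nat.eq_zero_or_pos t with h | h
          · exfalso
            apply q_not_dvd_n hr hq h2n
            exact ⟨s, by omega⟩
          · exact h
        have htd : ¬ q ∣ t := by
          intro hqt
          apply q_not_dvd_n hr hq h2n
          have : q ∣ t + s * q := Nat.dvd_add hqt ⟨s, by ring⟩
          rwa [htsq] at this
        have htqb : t * q ≤ (2*r^2) * q := Nat.mul_le_mul_right q htub
        have hc3 : (2*r^2) * q = 4*r^3 + 2*r^2 := by rw [hq]; ring
        have htD : t * q + δ' < n := by omega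
        have htle : t ≤ δ' := by omega
        have htlt : t < s := by omega
        have hsub : cycCoset q n s ⊆ cycCoset q n t := by
          apply coset_subset hr hq hn_expr h2n (k := 2)
          have hnpos : 0 < n := by omega
          have hcast : (t : ZMod n) + (s : ZMod n) * (q : ZMod n) = 0 := by
            have := congrArg (fun a : ℕ => (a : ZMod n)) htsq
            push_cast at this
            simpa [ZMod.natCast_self] using this
          have e1 : (t : ZMod n) = -((s : ZMod n) * (q : ZMod n)) :=
            eq_neg_of_add_eq_zero_left hcast
          have h3 := q3z (n := n) h2n
          rw [e1]
          linear_combination ((s : ZMod n)) * h3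
        obtain ⟨u, hu, hsub2⟩ := ih t htlt (Finset.mem_Icc.2 ⟨ht1, htle⟩)
        exact ⟨u, hu, subset_trans hsub hsub2⟩

end Stmt12Aux

namespace Stmt12Aux

variable {q n r : ℕ}

lemma union_card (hr : 1 ≤ r) (hq : q = 2 * r + 1)
    (hn_expr : n = 4*r^3 + 6*r^2 + 3*r + 1) (h2n : 2 * n = q ^ 3 + 1)
    {δ' : ℕ} (hδ'2 : δ' ≤ 2*r^2 + 2*r) :
    ((Finset.Icc 1 δ').biUnion (cycCoset q n)).card
      = 6 * ((Finset.Icc 1 δ').filter (fun u => ¬ q ∣ u ∧ u * q + δ' < n)).card := by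
  classical
  set S' := (Finset.Icc 1 δ').filter (fun u => ¬ q ∣ u ∧ u * q + δ' < n) with hS'
  have hU : (Finset.Icc 1 δ').biUnion (cycCoset q n) = S'.biUnion (cycCoset q n) := by
    apply Finset.Subset.antisymm
    · intro x hx
      rw [Finset.mem_biUnion] at hx ⊢
      obtain ⟨s, hs, hxs⟩ := hx
      obtain ⟨t, ht, hsub⟩ := cover hr hq hn_expr h2n hδ'2 s hs
      exact ⟨t, ht, hsub hxs⟩
    · exact Finset.biUnion_subset_biUnion_of_subset_left _ (Finset.filter_subset _ _)
  have hq2v : q ^ 2 = 4*r^2 + 4*r + 1 := by rw [hq]; ring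
  have hdisj : ∀ x ∈ S', ∀ y ∈ S', x ≠ y → Disjoint (cycCoset q n x) (cycCoset q n y) := by
    intro x hx y hy hxy
    rw [hS', Finset.mem_filter, Finset.mem_Icc] at hx hy
    exact coset_disj hr hq hn_expr h2n hδ'2 hx.1.1 hx.1.2 hx.2.1 hx.2.2
      hy.1.1 hy.1.2 hy.2.1 hy.2.2 hxy
  rw [hU, Finset.card_biUnion hdisj]
  have hcards : ∀ u ∈ S', (cycCoset q n u).card = 6 := by
    intro u hu
    rw [hS', Finset.mem_filter, Finset.mem_Icc] at hu
    exact card6 hr hq hn_expr h2n hu.1.1 (by linarith [hu.1.2, hδ'2, hq2v]) hu.2.1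
  have hsum : ∑ u ∈ S', (cycCoset q n u).card = ∑ _u ∈ S', 6 :=
    Finset.sum_congr rfl hcards
  rw [hsum, Finset.sum_const, smul_eq_mul, mul_comm]

lemma S_count (q' m : ℕ) :
    ((Finset.Icc 1 m).filter (fun s => ¬ q' ∣ s)).card = m - m / q' := by
  classical
  have h0 : Finset.Icc 1 m = Finset.Ioc 0 m := by
    rw [show (1 : ℕ) = 0 + 1 from rfl, Finset.Icc_add_one_left_eq_Ioc]
  have h1 := Nat.Ioc_filter_dvd_card_eq_div m q'
  have h2 := Finset.card_filter_add_card_filter_not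
    (s := Finset.Icc 1 m) (p := fun s => q' ∣ s)
  have h3 : (Finset.Icc 1 m).card = m := by rw [Nat.card_Icc]; omega
  rw [h0] at h2 h3 ⊢
  omega

lemma D_empty (hr : 1 ≤ r) (hq : q = 2 * r + 1)
    (hn_expr : n = 4*r^3 + 6*r^2 + 3*r + 1)
    {δ' : ℕ} (hδ'2 : δ' ≤ 2*r^2 + r) :
    ((Finset.Icc 1 δ').filter (fun s => ¬ q ∣ s)).filter
      (fun s => ¬ (s * q + δ' < n)) = ∅ := by
  classical
  rw [Finset.filter_eq_empty_iff]
  intro s hs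
  rw [Finset.mem_filter, Finset.mem_Icc] at hs
  have h1 : s * q ≤ (2*r^2 + r) * q := Nat.mul_le_mul_right q (by omega)
  have h2 : (2*r^2 + r) * q = 4*r^3 + 4*r^2 + r := by rw [hq]; ring
  omega

lemma D_Icc (hr : 1 ≤ r) (hq : q = 2 * r + 1)
    (hn_expr : n = 4*r^3 + 6*r^2 + 3*r + 1)
    {δ' : ℕ} (hδ'2 : δ' ≤ 2*r^2 + 2*r) (hlow : 2*r^2 + r + 1 ≤ δ') :
    ((Finset.Icc 1 δ').filter (fun s => ¬ q ∣ s)).filter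
      (fun s => ¬ (s * q + δ' < n)) = Finset.Icc (2*r^2 + r + 1) δ' := by
  classical
  ext s
  simp only [Finset.mem_filter, Finset.mem_Icc, not_lt]
  constructor
  · rintro ⟨⟨⟨hs1, hs2⟩, -⟩, hge⟩
    refine ⟨?_, hs2⟩
    by_contra hcon
    push_neg at hcon
    have h1 : s * q ≤ (2*r^2 + r) * q := Nat.mul_le_mul_right q (by omega)
    have h2 : (2*r^2 + r) * q = 4*r^3 + 4*r^2 + r := by rw [hq]; ring
    omega
  · rintro ⟨hs1, hs2⟩
    have hnd : ¬ q ∣ s := by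
      rintro ⟨c, rfl⟩
      have hcr : c ≤ r := by
        by_contra hcon
        push_neg at hcon
        have h1 : q * (r + 1) ≤ q * c := Nat.mul_le_mul_left q hcon
        have h2 : q * (r + 1) = 2*r^2 + 3*r + 1 := by rw [hq]; ring
        omega
      have h1 : q * c ≤ q * r := Nat.mul_le_mul_left q hcr
      have h2 : q * r = 2*r^2 + r := by rw [hq]; ring
      omega
    have h1 : (2*r^2 + r + 1) * q ≤ s * q := Nat.mul_le_mul_right q hs1
    have h2 : (2*r^2 + r + 1) * q = 4*r^3 + 4*r^2 + 3*r + 1 := by rw [hq]; ring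
    exact ⟨⟨⟨by omega, hs2⟩, hnd⟩, by omega⟩

lemma eps_eq (hq3 : 3 ≤ q) (δ' : ℕ) :
    ⌈(δ' : ℚ) * (1 - (q : ℚ)⁻¹)⌉ = (δ' : ℤ) - ((δ' / q : ℕ) : ℤ) := by
  have hqpos : (0 : ℚ) < (q : ℚ) := by exact_mod_cast (by omega : 0 < q)
  have key : (δ' : ℚ) * (1 - (q : ℚ)⁻¹) = -((δ' : ℚ) / (q : ℚ)) + ((δ' : ℤ) : ℚ) := by
    field_simp
    push_cast
    ring
  rw [key, Int.ceil_add_intCast, Int.ceil_neg]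
  have h1 : ⌊(δ' : ℚ) / (q : ℚ)⌋₊ = δ' / q := Nat.floor_div_eq_div δ' q
  have h2 : ((⌊(δ' : ℚ) / (q : ℚ)⌋₊ : ℕ) : ℤ) = ⌊(δ' : ℚ) / (q : ℚ)⌋ :=
    Int.natCast_floor_eq_floor (by positivity)
  rw [← h2, h1]
  ring

end Stmt12Aux


open Stmt12Aux in
/-- dimension of BCH codes of length `n = (q^3+1)/2` for odd prime
power `q`, expressed via `|C_1 ∪ ⋯ ∪ C_{δ-1}| = n - k`. -/
theorem stmt_12 (q n : ℕ) (hq : IsPrimePow q) (hodd : Odd q)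
    (hn : n = (q ^ 3 + 1) / 2)
    (δ : ℕ) (hδ1 : 1 ≤ δ - 1) (hδ2 : δ - 1 ≤ (q ^ 2 - 1) / 2)
    (ε : ℤ) (hε : ε = ⌈((δ : ℚ) - 1) * (1 - (q : ℚ)⁻¹)⌉)
    (N : ℤ) (hN : N = ((Finset.Icc 1 (δ - 1)).biUnion (cycCoset q n)).card) :
    (2 ≤ δ → δ ≤ (q ^ 2 - 1) / 2 - (q - 3) / 2 →
      N = (n : ℤ) - ((n : ℤ) - 6 * ε)) ∧
    ((q ^ 2 - 1) / 2 - (q - 3) / 2 < δ → δ ≤ (q ^ 2 - 1) / 2 + 1 →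
      N = (n : ℤ) - ((n : ℤ) - 6 * ε
            + 6 * ((δ : ℤ) - (((q ^ 2 - 1) / 2 : ℕ) : ℤ) + (((q - 2) / 2 : ℕ) : ℤ)))) := by
  classical
  obtain ⟨r, hq'⟩ := hodd
  have hq2le : 2 ≤ q := hq.two_le
  have hr : 1 ≤ r := by omega
  have hqe : q = 2 * r + 1 := by omega
  have hn_expr : n = 4*r^3 + 6*r^2 + 3*r + 1 := by
    have h1 : q ^ 3 + 1 = 2 * (4*r^3 + 6*r^2 + 3*r + 1) := by rw [hqe]; ring
    rw [hn, h1, Nat.mul_div_cancel_left _ (by norm_num : 0 < 2)]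
  have h2n : 2 * n = q ^ 3 + 1 := by rw [hn_expr, hqe]; ring
  obtain ⟨δ', rfl⟩ : ∃ d, δ = d + 1 := ⟨δ - 1, by omega⟩
  simp only [Nat.add_sub_cancel] at hδ1 hδ2 hε hN ⊢
  have hq2v : q ^ 2 = 4*r^2 + 4*r + 1 := by rw [hqe]; ring
  obtain ⟨P, hP⟩ : ∃ P, P = r ^ 2 := ⟨_, rfl⟩
  have hK : (q ^ 2 - 1) / 2 = 2*P + 2*r := by rw [hq2v, ← hP]; omega
  have hq3half : (q - 3) / 2 = r - 1 := by omega
  have hq2half : (q - 2) / 2 = r - 1 := by omega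
  have hδ'2P : δ' ≤ 2*P + 2*r := by rw [← hK]; exact hδ2
  have hδ'2 : δ' ≤ 2*r^2 + 2*r := by rw [hP] at hδ'2P; exact hδ'2P
  have hUcard := union_card hr hqe hn_expr h2n hδ'2
  have hsplit := Finset.card_filter_add_card_filter_not
      (s := (Finset.Icc 1 δ').filter (fun s => ¬ q ∣ s)) (p := fun s => s * q + δ' < n)
  have hff : ((Finset.Icc 1 δ').filter (fun s => ¬ q ∣ s)).filter (fun s => s * q + δ' < n)
      = (Finset.Icc 1 δ').filter (fun u => ¬ q ∣ u ∧ u * q + δ' < n) := by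
    rw [Finset.filter_filter]
  rw [hff] at hsplit
  have hScount := S_count q δ'
  have hε' : ε = (δ' : ℤ) - ((δ' / q : ℕ) : ℤ) := by
    have hcast : ((δ' + 1 : ℕ) : ℚ) - 1 = (δ' : ℚ) := by push_cast; ring
    rw [hε, hcast]
    exact eps_eq (by omega) δ'
  obtain ⟨M, hM⟩ : ∃ M, M = δ' / q := ⟨_, rfl⟩
  have hMle : M ≤ δ' := by rw [hM]; exact Nat.div_le_self δ' q
  rw [← hM] at hScount hε'
  constructor
  · intro h1 h2
    rw [hK, hq3half] at h2
    have hsmallP : δ' ≤ 2*P + r := by omega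
    have hsmall : δ' ≤ 2*r^2 + r := by rw [hP] at hsmallP; exact hsmallP
    have hDempty := D_empty hr hqe hn_expr hsmall
    have hDcard : (((Finset.Icc 1 δ').filter (fun s => ¬ q ∣ s)).filter
        (fun s => ¬ (s * q + δ' < n))).card = 0 := by rw [hDempty]; simp
    clear hn hn_expr h2n hq2v hδ2 hδ'2 hδ'2P hsmall hsmallP hq' hqe hq hK hq3half hq2half h1 h2 hDempty hff hM hP hε hδ1 hq2le hr
    omega
  · intro h1 h2
    rw [hK, hq3half] at h1
    have hlowP : 2*P + r + 1 ≤ δ' := by omega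
    have hlow : 2*r^2 + r + 1 ≤ δ' := by rw [hP] at hlowP; exact hlowP
    have hDIcc := D_Icc hr hqe hn_expr hδ'2 hlow
    have hDcard : (((Finset.Icc 1 δ').filter (fun s => ¬ q ∣ s)).filter
        (fun s => ¬ (s * q + δ' < n))).card = δ' + 1 - (2*r^2 + r + 1) := by
      rw [hDIcc, Nat.card_Icc]
    rw [← hP] at hDcard
    rw [hK, hq2half]
    clear hn hn_expr h2n hq2v hδ2 hδ'2 hq' hqe hq hq3half h2 hDIcc hff hM hε hδ1 hq2le hr hlow
    omega
end

section
/- Let q be an odd prime power, m = 2t with m ≥ 4, and n = (q^m+1)/2. Then: (1) every integer i with (q^t+1)/2 ≤ i ≤ q^t+1 and q ∤ i is a coset leader modulo n with q-cyclotomic coset of exactly 2m elements, except i = (q^t+1)/2 and i = q^t+1. (2) If moreover m ≥ 8, then every integer i with (q^t+1)/2 ≤ i ≤ (q^{t+1}-1)/2 and q ∤ i is a coset leader modulo n with q-cyclotomic coset of exactly 2m elements, except when i ∈ X_1 ∪ X_2 ∪ X_3 ∪ X_4 ∪ X_5, where X_1 = { a·q^t + b : 1 ≤ b ≤ a ≤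 (q-1)/2 }, X_2 = { a·q^t - b : 1 ≤ b < a ≤ (q-1)/2 }, X_3 = { a·q^t + (q^t-1)/2 + b : 1 ≤ b ≤ a < (q-1)/2 } ∪ { a·q^t + (q^t+1)/2 - b : 1 ≤ b ≤ a < (q-1)/2 }, X_4 = { a(q^t+1) + (q^t+1)/2 : 0 ≤ a < (q-1)/2 }, and X_5 = { i : (q^{t+1}-q^2)/2 + 1 ≤ i ≤ (q^{t+1}-1)/2, q ∤ i }. -/
lemma ord_lemma (q t n' : ℕ) (hq : 2 ≤ q) (ht : 1 ≤ t)
    (hneg : ((q : ZMod n')) ^ (2*t) = -1)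
    (hbig : ∀ e, 3*e ≤ 2*t → q^e + 1 < n') :
    orderOf ((q : ℕ) : ZMod n') = 4*t := by
  have hn2 : 2 < n' := by simpa using hbig 0 (by omega)
  haveI : NeZero n' := ⟨by omega⟩
  have hne : (-1 : ZMod n') ≠ 1 := by
    intro h
    have h2 : ((2:ℕ) : ZMod n') = 0 := by push_cast; linear_combination -h
    rw [ZMod.natCast_eq_zero_iff] at h2
    have := Nat.le_of_dvd (by norm_num) h2
    omega
  have hpow : ((q:ZMod n')) ^ (4*t) = 1 := by
    have h4 : (4*t) = (2*t)*2 := by ring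
    rw [h4, pow_mul, hneg]; ring
  have hdvd : orderOf ((q:ℕ) : ZMod n') ∣ 4*t := orderOf_dvd_of_pow_eq_one hpow
  set d := orderOf ((q:ℕ) : ZMod n') with hd
  have hd0 : d ≠ 0 := by
    intro h0
    have h1 : ((q:ZMod n')) ^ (2*t) ≠ -1 := by
      rw [show ((q:ZMod n')) = ((q:ℕ):ZMod n') by push_cast; rfl] at *
      rw [orderOf_eq_zero_iff] at h0
      intro hcon
      exact h0 (isOfFinOrder_iff_pow_eq_one.mpr ⟨4*t, by omega, hpow⟩)
    exact h1 hneg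
  set r := (2*t) % d with hr
  have hqr : ((q:ZMod n')) ^ r = -1 := by
    rw [hr, hd, pow_mod_orderOf, hneg]
  have hr0 : r ≠ 0 := by
    intro h0
    rw [h0, pow_zero] at hqr
    exact hne hqr.symm
  have hrd : r < d := Nat.mod_lt _ (by omega)
  have hq2r : ((q:ZMod n')) ^ (2*r) = 1 := by
    rw [two_mul, pow_add, hqr]; ring
  have hdvd2r : d ∣ 2*r := orderOf_dvd_of_pow_eq_one hq2r
  have h2rd : 2*r = d := by
    rcases hdvd2r with ⟨k, hk⟩
    rcases Nat.lt_or_ge k 2 with hk2 | hk2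
    · interval_cases k <;> omega
    · nlinarith
  have hmod := Nat.div_add_mod (2*t) d
  set k := 2*t/d with hkdef
  have hdiv : 2*t = r * (2*k + 1) := by
    calc 2*t = d*k + r := by omega
    _ = (2*r)*k + r := by rw [h2rd]
    _ = r * (2*k+1) := by ring
  rcases Nat.eq_zero_or_pos k with hk | hk
  · rw [hk] at hdiv; simp at hdiv; omega
  · exfalso
    have h3r : 3*r ≤ 2*t := by nlinarith
    have hlt := hbig r h3r
    have hz : ((q^r + 1 : ℕ) : ZMod n') = 0 := by push_cast; rw [hqr]; ring
    rw [ZMod.natCast_eq_zero_iff] at hz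
    have := Nat.le_of_dvd (by positivity) hz
    omega


lemma core_lemma (q t n i a c : ℕ) (hq3 : 3 ≤ q) (hqodd : Odd q) (ht : 2 ≤ t)
    (hn : 2*n = q^(2*t) + 1) (hi : i = a * q^t + c) (hc : c < q^t)
    (hD1 : a + 1 ≤ c) (hD2 : c + a + 1 ≤ q^t)
    (hD3 : 2*(c+a) + 1 ≤ q^t ∨ q^t + 2*a + 3 ≤ 2*c)
    (hD4 : 2*i + q^2 ≤ q^(t+1))
    (hD5 : ¬ q ∣ c) (h2a : 2*a + 1 ≤ q) :
    ∀ j' < t, ∃ K r, i * q^(t+j') = K*n + r ∧ i ≤ r ∧ r + i ≤ n := by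
  intro j' hj'
  set X := q^t with hXdef
  set Y := q^(t-1) with hYdef
  have hqY : q * Y = X := by rw [hYdef, hXdef, ← pow_succ']; congr 1; omega
  have hYpos : 1 ≤ Y := Nat.one_le_pow _ _ (by omega)
  have hXq2 : q*q ≤ X := by
    calc q*q = q^2 := by ring
    _ ≤ q^t := Nat.pow_le_pow_right (by omega) ht
  have hXodd : Odd X := hqodd.pow
  have hYodd : Odd Y := hqodd.pow
  have hn2 : 2*n = X*X + 1 := by rw [hn]; congr 1; rw [hXdef, ← pow_add]; congr 1; omega
  have hD4' : 2*i + q*q ≤ q*X := by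
    calc 2*i + q*q = 2*i + q^2 := by ring
    _ ≤ q^(t+1) := hD4
    _ = q * X := by rw [hXdef, pow_succ]; ring
  set P := q^(t-j') with hPdef
  set Q := q^(j') with hQdef
  have hPpos : 1 ≤ P := Nat.one_le_pow _ _ (by omega)
  have hQpos : 1 ≤ Q := Nat.one_le_pow _ _ (by omega)
  have hPQ : P * Q = X := by rw [hPdef, hQdef, hXdef, ← pow_add]; congr 1; omega
  have htj : q^(t+j') = X * Q := by rw [hXdef, hQdef, ← pow_add]
  have hQY : Q ≤ Y := by
    rw [hQdef, hYdef]; exact Nat.pow_le_pow_right (by omega) (by omega)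
  set d := c / P with hddef
  set c' := c % P with hc'def
  have hcdc : P * d + c' = c := Nat.div_add_mod c P
  have hqP : q ∣ P := by
    rw [hPdef]; exact dvd_pow_self q (by omega)
  have hc'q : ¬ q ∣ c' := by
    intro hdvd
    exact hD5 (by rw [← hcdc]; exact Dvd.dvd.add (Dvd.dvd.mul_right hqP d) hdvd)
  have hc'1 : 1 ≤ c' := by
    rcases Nat.eq_zero_or_pos c' with h | h
    · exact absurd (h ▸ dvd_zero q) hc'q
    · exact h
  have hc'P : c' < P := Nat.mod_lt _ (by omega)
  have hdQ : d + 1 ≤ Q := by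
    have : c / P < Q := (Nat.div_lt_iff_lt_mul (by omega)).mpr (by rw [mul_comm, hPQ]; exact hc)
    omega
  set e := c' * Q with hedef
  set B := a*Q + d with hBdef
  have hepos : 1 ≤ e := Nat.one_le_iff_ne_zero.mpr (by positivity)
  have heX : e + Q ≤ X := by
    have h1 : (c' + 1) * Q ≤ P * Q := Nat.mul_le_mul_right Q (by omega)
    rw [hPQ] at h1
    calc e + Q = (c' + 1) * Q := by ring
    _ ≤ X := h1
  have EQ1 : i * (X*Q) + B = B*(2*n) + e*X := by
    have h1 : i = a*X + (P*d + c') := by rw [hcdc]; exact hi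
    rw [h1, hBdef, hedef, hn2]
    calc (a*X + (P*d + c'))*(X*Q) + (a*Q + d)
        = (a*Q)*(X*X) + (d*X)*(P*Q) + (c'*Q)*X + ((a*Q) + d) := by ring
      _ = (a*Q)*(X*X) + (d*X)*X + (c'*Q)*X + ((a*Q) + d) := by rw [hPQ]
      _ = (a*Q + d)*(X*X+1) + (c'*Q)*X := by ring
  have hipos : 1 ≤ i := by omega
  have main : (i + B ≤ e*X ∧ e*X + i ≤ n + B) ∨ (i + B + n ≤ e*X ∧ e*X + i ≤ 2*n + B) := by
      have hYX : Y ≤ X := by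
        calc Y = 1*Y := by ring
        _ ≤ q*Y := Nat.mul_le_mul_right Y (by omega)
        _ = X := hqY
      have hqX : q ≤ X := by
        calc q ≤ q*q := Nat.le_mul_of_pos_right q (by omega)
        _ ≤ X := hXq2
      rcases Nat.eq_zero_or_pos j' with h0 | hj1
      · -- j' = 0 : Q = 1, P = X, d = 0, c' = c, e = c, B = a
        have hQ1 : Q = 1 := by rw [hQdef, h0, pow_zero]
        have hPX : P = X := by rw [hPdef, h0, Nat.sub_zero, hXdef]
        have hd0 : d = 0 := by rw [hddef, hPX]; exact Nat.div_eq_of_lt hc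
        have hce : c' = c := by rw [hc'def, hPX]; exact Nat.mod_eq_of_lt hc
        have heB : e = c := by rw [hedef, hce, hQ1, mul_one]
        have hBa : B = a := by rw [hBdef, hQ1, hd0]; ring
        rw [heB, hBa]
        have hne : 2*c ≠ X := by intro h; rcases hXodd with ⟨k,hk⟩; omega
        rcases Nat.lt_or_ge (2*c) X with hA | hB2
        · left
          constructor
          · have f1 : (a+1)*X ≤ c*X := Nat.mul_le_mul_right X hD1
            rw [hi]; linarith
          · have h3 : 2*(c+a) + 1 ≤ X := by
              rcases hD3 with h | h
              · exact h
              · omega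
            have f1 : (2*(c+a)+1)*X ≤ X*X := Nat.mul_le_mul_right X h3
            have h2g : 2*(c*X + i) ≤ 2*(n + a) := by rw [hi]; linarith
            omega
        · have h3 : X + 2*a + 3 ≤ 2*c := by
            rcases hD3 with h | h
            · omega
            · exact h
          right
          constructor
          · have f1 : (X + 2*a + 3)*X ≤ (2*c)*X := Nat.mul_le_mul_right X h3
            have h2g : 2*(i + a + n) ≤ 2*(c*X) := by rw [hi]; linarith
            omega
          · have f1 : (c+a+1)*X ≤ X*X := Nat.mul_le_mul_right X hD2
            rw [hi]; linarith
      · -- j' ≥ 1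
        have hqQ : q ∣ Q := by rw [hQdef]; exact dvd_pow_self q (by omega)
        have hqQle : q ≤ Q := by
          have : q^1 ≤ q^j' := Nat.pow_le_pow_right (by omega) hj1
          simpa [hQdef] using this
        have hQq1 : Q = q * q^(j'-1) := by
          rw [hQdef, ← pow_succ']; congr 1; omega
        set E := c' * q^(j'-1) with hEdef
        have heE : e = q * E := by rw [hedef, hQq1]; ring
        have hE1 : 1 ≤ E := by
          have : 1 ≤ q^(j'-1) := Nat.one_le_pow _ _ (by omega)
          exact Nat.mul_pos hc'1 this
        have hneE : 2*E ≠ Y := by intro h; rcases hYodd with ⟨k,hk⟩; omega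
        rcases Nat.lt_or_ge (2*E) Y with hA | hB2
        · -- regime i
          left
          have h2e : 2*e + q ≤ X := by
            have h1 : q*(2*E+1) ≤ q*Y := Nat.mul_le_mul_left q (by omega)
            calc 2*e + q = q*(2*E+1) := by rw [heE]; ring
            _ ≤ q*Y := h1
            _ = X := hqY
          constructor
          · have hea : a + 2 ≤ e := by
              have h1 : q*1 ≤ q*E := Nat.mul_le_mul_left q hE1
              rw [heE]; omega
            have f1 : (a+2)*X ≤ e*X := Nat.mul_le_mul_right X hea
            have f2 : (2*a+1)*Q ≤ q*Y := le_trans (Nat.mul_le_mul_right Q h2a) (Nat.mul_le_mul_left q hQY)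
            rw [hi, hBdef]; linarith
          · have f3 : (2*e+q)*X ≤ X*X := Nat.mul_le_mul_right X h2e
            have f3' : 2*(e*X) + q*X ≤ X*X := by
              calc 2*(e*X) + q*X = (2*e+q)*X := by ring
              _ ≤ X*X := f3
            have h2g : 2*(e*X + i) ≤ 2*(n + B) := by
              linarith [f3', hD4', hn2, Nat.zero_le (q*q), Nat.zero_le B]
            exact Nat.le_of_mul_le_mul_left h2g (by norm_num)
        · -- regime ii
          right
          have h2e : X + q ≤ 2*e := by
            have h1 : q*Y + q*1 ≤ q*(2*E) := by
              have := Nat.mul_le_mul_left q (show Y + 1 ≤ 2*E by omega)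
              linarith [this]
            calc X + q = q*Y + q*1 := by rw [hqY]; ring
            _ ≤ q*(2*E) := h1
            _ = 2*e := by rw [heE]; ring
          constructor
          · -- LB : i + B + n ≤ e*X
            rcases Nat.lt_or_ge (2*E) (Y+3) with hE2 | hE3
            · -- 2E = Y+1 (Y+2 is odd so 2E ≠ Y+2)
              have h2EY : 2*E = Y + 1 := by rcases hYodd with ⟨k,hk⟩; omega
              have hj'1 : j' = 1 := by
                by_contra hco
                have hj2 : 2 ≤ j' := by omega
                have hqE : q ∣ E := Dvd.dvd.mul_left (dvd_pow_self q (by omega)) c'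
                have hqYd : q ∣ Y := by rw [hYdef]; exact dvd_pow_self q (by omega)
                rcases hqE with ⟨u, hu⟩
                rcases hqYd with ⟨v, hv⟩
                have h6 : 2*(q*u) = q*v + 1 := by omega
                have hd1 : q ∣ q*v + 1 := ⟨2*u, by rw [show q*(2*u) = 2*(q*u) by ring]; omega⟩
                have := (Nat.dvd_add_right ⟨v, rfl⟩).mp hd1
                have := Nat.le_of_dvd (by norm_num) this
                omega
              have hQq : Q = q := by rw [hQdef, hj'1, pow_one]
              have hPY : P = Y := by rw [hPdef, hYdef]; congr 1; omega
              have hEc : E = c' := by rw [hEdef, hj'1]; simp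
              have h2c' : 2*c' = Y + 1 := by rw [← hEc]; exact h2EY
              -- derive d bound : 2*(a*q) + 2*d + 2 ≤ q*q
              have hc2 : 2*c = 2*(Y*d) + Y + 1 := by
                have h := hcdc; rw [hPY] at h; omega
              have hi2 : 2*i = 2*(a*(q*Y)) + 2*(Y*d) + Y + 1 := by
                rw [hi, ← hqY]; omega
              have hqX2 : q*X = (q*q)*Y := by rw [← hqY]; ring
              have key : (2*(a*q) + 2*d + 1)*Y + (q*q + 1) ≤ (q*q)*Y := by linarith
              have hsmall : 2*(a*q) + 2*d + 2 ≤ q*q := by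
                by_contra hcon
                have h5 : q*q ≤ 2*(a*q) + 2*d + 1 := by omega
                have := Nat.mul_le_mul_right Y h5
                linarith [key, this, Nat.zero_le (q*q)]
              -- final
              have h2e' : 2*e = X + q := by
                calc 2*e = q*(2*E) := by rw [heE]; ring
                _ = q*(Y+1) := by rw [h2EY]
                _ = X + q := by rw [← hqY]; ring
              have h2eX : 2*(e*X) = X*X + q*X := by
                calc 2*(e*X) = (2*e)*X := by ring
                _ = (X+q)*X := by rw [h2e']
                _ = X*X + q*X := by ring
              have h2g : 2*(i + B + n) ≤ 2*(e*X) := by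
                rw [hBdef, hQq]; linarith
              exact Nat.le_of_mul_le_mul_left h2g (by norm_num)
            · -- 2E ≥ Y+3
              have h2e3 : X + 3*q ≤ 2*e := by
                have h1 : q*(Y+3) ≤ q*(2*E) := Nat.mul_le_mul_left q hE3
                calc X + 3*q = q*(Y+3) := by rw [← hqY]; ring
                _ ≤ q*(2*E) := h1
                _ = 2*e := by rw [heE]; ring
              have f5 : (X + 3*q)*X ≤ (2*e)*X := Nat.mul_le_mul_right X h2e3
              have f5' : X*X + 3*(q*X) ≤ 2*(e*X) := by
                calc X*X + 3*(q*X) = (X+3*q)*X := by ring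
                _ ≤ (2*e)*X := f5
                _ = 2*(e*X) := by ring
              have f2 : (2*a+1)*Q ≤ q*Y := le_trans (Nat.mul_le_mul_right Q h2a) (Nat.mul_le_mul_left q hQY)
              have f2' : 2*(a*Q) + Q ≤ X := by
                calc 2*(a*Q) + Q = (2*a+1)*Q := by ring
                _ ≤ q*Y := f2
                _ = X := hqY
              have hD4'' : 2*(a*X) + 2*c + q*q ≤ q*X := by
                have h7 := hD4'
                rw [hi] at h7
                omega
              have fX : X ≤ q*X := Nat.le_mul_of_pos_left X (by omega)
              have fQ : Q + q*q ≤ q*X := by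
                have h11 : q*X = (q*q)*Y := by rw [← hqY]; ring
                have h12 : q*q + Y ≤ (q*q)*Y := Nat.add_le_mul (by
                  calc 2 ≤ q := by omega
                  _ ≤ q*q := Nat.le_mul_of_pos_left q (by omega)) (by
                  calc 2 ≤ q := by omega
                  _ = q^1 := (pow_one q).symm
                  _ ≤ q^(t-1) := Nat.pow_le_pow_right (by omega) (by omega)
                  _ = Y := hYdef.symm)
                omega
              have h2g : 2*(i + B + n) ≤ 2*(e*X) := by
                rw [hi, hBdef]
                linarith [f5', f2', hD4'', fX, fQ, hn2, hdQ, Nat.zero_le (q*q), Nat.zero_le (a*Q), Nat.zero_le (a*X), Nat.zero_le (q*X), Nat.zero_le Q, Nat.zero_le d]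
              exact Nat.le_of_mul_le_mul_left h2g (by norm_num)
          · -- UB : e*X + i ≤ 2*n + B
            have h5 : e + q ≤ X := by omega
            have f4 : (e+q)*X ≤ X*X := Nat.mul_le_mul_right X h5
            have f4' : e*X + q*X ≤ X*X := by
              calc e*X + q*X = (e+q)*X := by ring
              _ ≤ X*X := f4
            have h2g : 2*(e*X + i) ≤ 2*(2*n + B) := by
              linarith [f4', hD4', hn2, Nat.zero_le (q*q), Nat.zero_le (q*X), Nat.zero_le B]
            exact Nat.le_of_mul_le_mul_left h2g (by norm_num)
  rcases main with ⟨LB, UB⟩ | ⟨LB, UB⟩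
  · refine ⟨2*B, e*X - B, ?_, by omega, by omega⟩
    rw [htj]
    zify [show B ≤ e*X by omega]
    zify at EQ1
    linear_combination EQ1
  · refine ⟨2*B + 1, e*X - B - n, ?_, by omega, by omega⟩
    rw [htj]
    zify [show B ≤ e*X by omega, show n ≤ e*X - B by omega]
    zify at EQ1
    linear_combination EQ1

lemma coprime_succ (m : ℕ) : Nat.Coprime m (m+1) := by
  simp [Nat.Coprime, Nat.gcd_comm m (m+1), Nat.succ_eq_add_one, Nat.gcd_add_self_right]


lemma master_lemma (q t n i a c : ℕ) (hq3 : 3 ≤ q) (hqodd : Odd q) (ht : 2 ≤ t)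
    (hn : 2*n = q^(2*t) + 1) (hi : i = a * q^t + c) (hc : c < q^t)
    (hD1 : a + 1 ≤ c) (hD2 : c + a + 1 ≤ q^t)
    (hD3 : 2*(c+a) + 1 ≤ q^t ∨ q^t + 2*a + 3 ≤ 2*c)
    (hD4 : 2*i + q^2 ≤ q^(t+1))
    (hD5 : ¬ q ∣ c) (h2a : 2*a + 1 ≤ q)
    (hcard : ∀ e, 3*e ≤ 2*t → 2*i*(q^e+1) ≤ q^(2*t)) :
    IsCosetLeader q n i ∧ (cycCoset q n i).card = 4*t := by
  have hipos : 1 ≤ i := by omega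
  have hcore := core_lemma q t n i a c hq3 hqodd ht hn hi hc hD1 hD2 hD3 hD4 hD5 h2a
  set X := q^t with hXdef
  set Y := q^(t-1) with hYdef
  have hqY : q * Y = X := by rw [hYdef, hXdef, ← pow_succ']; congr 1; omega
  have hn2 : 2*n = X*X + 1 := by rw [hn]; congr 1; rw [hXdef, ← pow_add]; congr 1; omega
  have hnpos : 0 < n := by
    have : 1 ≤ X := Nat.one_le_pow _ _ (by omega)
    nlinarith
  have hD4' : 2*i + q*q ≤ q*X := by
    calc 2*i + q*q = 2*i + q^2 := by ring
    _ ≤ q^(t+1) := hD4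
    _ = q * X := by rw [hXdef, pow_succ]; ring
  -- the "small exponent" bound
  have lin : ∀ j₂, j₂ < t → i*q^j₂ + i ≤ n := by
    have h1 : (2*i + q*q)*(Y+1) ≤ (q*X)*(Y+1) := Nat.mul_le_mul_right _ hD4'
    have h1' : 2*(i*Y) + 2*i + (q*q)*Y + q*q ≤ (q*X)*Y + q*X := by
      calc 2*(i*Y) + 2*i + (q*q)*Y + q*q = (2*i + q*q)*(Y+1) := by ring
      _ ≤ (q*X)*(Y+1) := h1
      _ = (q*X)*Y + q*X := by ring
    have h2 : (q*X)*Y = X*X := by rw [← hqY]; ring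
    have h3 : (q*q)*Y = q*X := by rw [← hqY]; ring
    have key : 2*(i*Y) + 2*i + q*q ≤ X*X := by omega
    intro j₂ hj₂
    have hb : q^j₂ ≤ Y := by
      rw [hYdef]; exact Nat.pow_le_pow_right (by omega) (by omega)
    have h4 : i*q^j₂ ≤ i*Y := Nat.mul_le_mul_left i hb
    omega
  -- remainders for all j < 4t
  have hmod : ∀ j, j < 4*t → i ≤ (i*q^j) % n := by
    intro j hj
    rcases Nat.lt_or_ge j t with h1 | h1
    · have hlt : i*q^j < n := by have := lin j h1; omega
      rw [Nat.mod_eq_of_lt hlt]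
      exact Nat.le_mul_of_pos_right i (Nat.pow_pos (n := j) (by omega))
    · rcases Nat.lt_or_ge j (2*t) with h2 | h2
      · obtain ⟨K, r, hKr, hir, hrn⟩ := hcore (j - t) (by omega)
        have hj' : t + (j - t) = j := by omega
        rw [hj'] at hKr
        have hr : (i*q^j) % n = r := by
          rw [hKr, add_comm, Nat.add_mul_mod_self_right]
          exact Nat.mod_eq_of_lt (by omega)
        omega
      · rcases Nat.lt_or_ge j (3*t) with h3 | h3
        · set j₂ := j - 2*t with hj₂def
          have hj₂t : j₂ < t := by omega
          set A := i * q^j₂ with hAdef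
          have hA1 : 1 ≤ A := Nat.mul_pos hipos (by positivity)
          have hAn : A + i ≤ n := lin j₂ hj₂t
          have EQ : i*q^j + A = 2*A*n := by
            have hqj : q^j = q^j₂ * q^(2*t) := by rw [← pow_add]; congr 1; omega
            rw [hqj, hAdef]
            calc i*(q^j₂ * q^(2*t)) + i*q^j₂ = (i*q^j₂) * (q^(2*t) + 1) := by ring
            _ = (i*q^j₂) * (2*n) := by rw [← hn]
            _ = 2*(i*q^j₂)*n := by ring
          have heq : i*q^j = (2*A - 1)*n + (n - A) := by
            zify [show 1 ≤ 2*A by omega, show A ≤ n by omega]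
            zify at EQ
            linear_combination EQ
          have hr : (i*q^j) % n = n - A := by
            rw [heq, add_comm, Nat.add_mul_mod_self_right]
            exact Nat.mod_eq_of_lt (by omega)
          omega
        · set j' := j - 3*t with hj'def
          obtain ⟨K, r, hKr, hir, hrn⟩ := hcore j' (by omega)
          have hKn : K ≤ K*n := Nat.le_mul_of_pos_right K hnpos
          have EQ : i*q^j + (K*n + r) = 2*(K*n+r)*n := by
            have hqj : q^j = q^(t+j') * q^(2*t) := by rw [← pow_add]; congr 1; omega
            rw [hqj, ← mul_assoc, hKr,
              show (K*n+r)*q^(2*t) + (K*n+r) = (K*n+r)*(q^(2*t)+1) from by ring, ← hn]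
            ring
          have heq : i*q^j = (2*(K*n+r) - K - 1)*n + (n - r) := by
            zify [show K ≤ 2*(K*n+r) by omega, show 1 ≤ 2*(K*n+r) - K by omega, show r ≤ n by omega]
            zify at EQ
            linear_combination EQ
          have hr : (i*q^j) % n = n - r := by
            rw [heq, add_comm, Nat.add_mul_mod_self_right]
            exact Nat.mod_eq_of_lt (by omega)
          omega
  -- order of q mod n
  have hbig : ∀ e, 3*e ≤ 2*t → q^e + 1 < n := by
    intro e he
    have h := hcard e he
    rw [mul_assoc] at h
    have h2 : 2*(q^e+1) ≤ 2*(i*(q^e+1)) := by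
      have : 1*(q^e+1) ≤ i*(q^e+1) := Nat.mul_le_mul_right _ hipos
      omega
    omega
  haveI : NeZero n := ⟨by omega⟩
  have hdvdn : n ∣ q^(2*t)+1 := ⟨2, by omega⟩
  have hneg : ((q:ZMod n)) ^ (2*t) = -1 := by
    have hz : ((q^(2*t) + 1 : ℕ) : ZMod n) = 0 := by
      rw [ZMod.natCast_eq_zero_iff]; exact hdvdn
    push_cast at hz
    linear_combination hz
  have hord : orderOf ((q:ℕ) : ZMod n) = 4*t := ord_lemma q t n (by omega) (by omega) hneg hbig
  have hin : i < n := by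
    have h0 := lin 0 (by omega)
    rw [pow_zero, mul_one] at h0
    omega
  have hmem : i ∈ cycCoset q n i := by
    rw [cycCoset, Finset.mem_image]
    exact ⟨0, Finset.mem_range.mpr (by rw [hord]; omega), by simp [Nat.mod_eq_of_lt hin]⟩
  refine ⟨⟨hmem, ?_⟩, ?_⟩
  · intro x hx
    rw [cycCoset, Finset.mem_image] at hx
    obtain ⟨j, hj, hxe⟩ := hx
    rw [← hxe]
    exact hmod j (by rw [hord] at hj; exact Finset.mem_range.mp hj)
  · rw [cycCoset, hord, Finset.card_image_of_injOn, Finset.card_range]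
    have H : ∀ j k, j ≤ k → k < 4*t → (i*q^j)%n = (i*q^k)%n → j = k := by
      intro j k hjk hk heq
      have hmodeq : i*q^j ≡ i*q^k [MOD n] := heq
      have hdvd : (n:ℤ) ∣ ((i*q^k : ℕ) : ℤ) - ((i*q^j : ℕ) : ℤ) := hmodeq.dvd
      set D := k - j with hD
      have hkD : q^k = q^j * q^D := by rw [← pow_add]; congr 1; omega
      have hkDz : (q:ℤ)^k = (q:ℤ)^j * (q:ℤ)^D := by exact_mod_cast hkD
      have hfact : ((i*q^k : ℕ) : ℤ) - ((i*q^j : ℕ) : ℤ) = (i:ℤ)*q^j*((q:ℤ)^D - 1) := by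
        push_cast
        rw [hkDz]
        ring
      rw [hfact] at hdvd
      have hGpos : 0 < Nat.gcd i n := Nat.gcd_pos_of_pos_left n hipos
      obtain ⟨i₁, hi₁⟩ := Nat.gcd_dvd_left i n
      obtain ⟨n₁, hn₁⟩ := Nat.gcd_dvd_right i n
      have e1 : i / Nat.gcd i n = i₁ := Nat.div_eq_of_eq_mul_left hGpos (by nth_rewrite 1 [hi₁]; ring)
      have e2 : n / Nat.gcd i n = n₁ := Nat.div_eq_of_eq_mul_left hGpos (by nth_rewrite 1 [hn₁]; ring)
      have hcop : Nat.Coprime i₁ n₁ := by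
        have h := Nat.coprime_div_gcd_div_gcd (m := i) (n := n) hGpos
        rwa [e1, e2] at h
      set G := Nat.gcd i n with hG
      have hn₁dvd : n₁ ∣ n := ⟨G, by rw [hn₁]; ring⟩
      have hqcopn : Nat.Coprime q n :=
        Nat.Coprime.coprime_dvd_right hdvdn
          (Nat.Coprime.coprime_dvd_left (dvd_pow_self q (by omega : 2*t ≠ 0))
            (coprime_succ (q^(2*t))))
      have hqcopn₁ : Nat.Coprime q n₁ := Nat.Coprime.coprime_dvd_right hn₁dvd hqcopn
      have hn₁big : ∀ e, 3*e ≤ 2*t → q^e + 1 < n₁ := by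
        intro e he
        by_contra hcon
        push_neg at hcon
        have hGi : G ≤ i := Nat.le_of_dvd hipos ⟨i₁, hi₁⟩
        have h4 : G*n₁ ≤ G*(q^e+1) := Nat.mul_le_mul_left G hcon
        have h5 : G*(q^e+1) ≤ i*(q^e+1) := Nat.mul_le_mul_right _ hGi
        have h6 := hcard e he
        rw [mul_assoc] at h6
        have h7 : n = G*n₁ := hn₁
        omega
      haveI : NeZero n₁ := ⟨by have := hn₁big 0 (by omega); omega⟩
      have hneg₁ : ((q:ZMod n₁))^(2*t) = -1 := by
        have hz : ((q^(2*t) + 1 : ℕ) : ZMod n₁) = 0 := by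
          rw [ZMod.natCast_eq_zero_iff]
          exact dvd_trans hn₁dvd hdvdn
        push_cast at hz
        linear_combination hz
      have hord₁ := ord_lemma q t n₁ (by omega) (by omega) hneg₁ hn₁big
      have hiz : (i:ℤ) = (G:ℤ)*(i₁:ℤ) := by exact_mod_cast hi₁
      have hnz : (n:ℤ) = (G:ℤ)*(n₁:ℤ) := by exact_mod_cast hn₁
      have hGne : (G:ℤ) ≠ 0 := by exact_mod_cast hGpos.ne'
      have hdvd₂ : (n₁:ℤ) ∣ (i₁:ℤ)*(q:ℤ)^j*((q:ℤ)^D - 1) := by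
        rw [hiz, hnz] at hdvd
        rcases hdvd with ⟨w, hw⟩
        refine ⟨w, mul_left_cancel₀ hGne ?_⟩
        linear_combination hw
      have hdvd₃ : (n₁:ℤ) ∣ ((q:ℤ)^D - 1) := by
        have hc1 : IsCoprime ((n₁:ℕ):ℤ) ((i₁:ℕ):ℤ) := by
          rw [Int.isCoprime_iff_gcd_eq_one]
          simpa using hcop.symm
        have hc2 : IsCoprime ((n₁:ℕ):ℤ) ((q:ℤ)^j) := by
          apply IsCoprime.pow_right
          rw [Int.isCoprime_iff_gcd_eq_one]
          simpa using hqcopn₁.symm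
        have h9 : (n₁:ℤ) ∣ (i₁:ℤ)*((q:ℤ)^j*((q:ℤ)^D-1)) := by rw [← mul_assoc]; exact hdvd₂
        have h10 := hc1.dvd_of_dvd_mul_left h9
        exact hc2.dvd_of_dvd_mul_left h10
      have hq1 : ((q:ℕ) : ZMod n₁)^D = 1 := by
        have hz := (ZMod.intCast_zmod_eq_zero_iff_dvd _ n₁).mpr hdvd₃
        push_cast at hz
        linear_combination hz
      have hdD : 4*t ∣ D := by rw [← hord₁]; exact orderOf_dvd_of_pow_eq_one hq1
      rcases hdD with ⟨w, hw⟩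
      rcases Nat.eq_zero_or_pos w with hw0 | hw0
      · rw [hw0] at hw; simp at hw; omega
      · have h11 : 4*t ≤ 4*t*w := by
          calc 4*t = 4*t*1 := by ring
          _ ≤ 4*t*w := Nat.mul_le_mul_left _ hw0
        omega
    intro j hj k hk heq
    simp only [Finset.coe_range, Set.mem_Iio] at hj hk
    rcases le_total j k with h | h
    · exact H j k h hk heq
    · exact (H k j h hj heq.symm).symm

/-- coset leaders modulo `n = (q^m+1)/2` for odd prime power `q`, `m = 2t ≥ 4`. -/
theorem stmt_14 (q t m n : ℕ) (hq : IsPrimePow q) (hodd : Odd q)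
    (hm : m = 2 * t) (hm4 : 4 ≤ m) (hn : n = (q ^ m + 1) / 2) :
    (∀ i : ℕ, (q ^ t + 1) / 2 ≤ i → i ≤ q ^ t + 1 → ¬ q ∣ i →
      i ≠ (q ^ t + 1) / 2 → i ≠ q ^ t + 1 →
      IsCosetLeader q n i ∧ (cycCoset q n i).card = 2 * m) ∧
    (8 ≤ m → ∀ i : ℕ, (q ^ t + 1) / 2 ≤ i → i ≤ (q ^ (t + 1) - 1) / 2 → ¬ q ∣ i →
      ¬ ((∃ a b : ℕ, 1 ≤ b ∧ b ≤ a ∧ a ≤ (q - 1) / 2 ∧ i = a * q ^ t + b) ∨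
         (∃ a b : ℕ, 1 ≤ b ∧ b < a ∧ a ≤ (q - 1) / 2 ∧ i = a * q ^ t - b) ∨
         (∃ a b : ℕ, 1 ≤ b ∧ b ≤ a ∧ a < (q - 1) / 2 ∧
           (i = a * q ^ t + (q ^ t - 1) / 2 + b ∨ i = a * q ^ t + (q ^ t + 1) / 2 - b)) ∨
         (∃ a : ℕ, a < (q - 1) / 2 ∧ i = a * (q ^ t + 1) + (q ^ t + 1) / 2) ∨
         ((q ^ (t + 1) - q ^ 2) / 2 + 1 ≤ i ∧ i ≤ (q ^ (t + 1) - 1) / 2 ∧ ¬ q ∣ i)) →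
      IsCosetLeader q n i ∧ (cycCoset q n i).card = 2 * m) := by
  have hq2 : 2 ≤ q := hq.two_le
  obtain ⟨kq, hkq⟩ := id hodd
  have hq3 : 3 ≤ q := by omega
  have ht : 2 ≤ t := by omega
  have hqtodd : Odd (q^t) := hodd.pow
  obtain ⟨kt, hkt⟩ := hqtodd
  have hqmodd : Odd (q^m) := hodd.pow
  have hn2 : 2*n = q^(2*t) + 1 := by
    obtain ⟨km, hkm⟩ := hqmodd
    rw [hn, ← hm]
    omega
  have hqt1 : 1 ≤ q^t := Nat.one_le_pow _ _ (by omega)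
  have hqtq2 : q^2 ≤ q^t := Nat.pow_le_pow_right (by omega) ht
  have hqq : q ≤ q^t := by
    calc q = q^1 := (pow_one q).symm
    _ ≤ q^t := Nat.pow_le_pow_right (by omega) (by omega)
  have hqt1' : q^(t+1) = q * q^t := by rw [pow_succ]; ring
  have hq2q : q ≤ q^2 := by
    calc q = q^1 := (pow_one q).symm
    _ ≤ q^2 := Nat.pow_le_pow_right (by omega) (by omega)
  have h3qt : 3 * q^t ≤ q^(t+1) := by
    rw [hqt1']; exact Nat.mul_le_mul_right _ hq3
  have hcard24 : 4*t = 2*m := by omega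
  constructor
  · -- Part 1
    intro i h1 h2 h3 h4 h5
    have hlow : q^t + 3 ≤ 2*i := by
      have : (q^t+1)/2 = kt + 1 := by omega
      rw [this] at h1 h4
      omega
    have hup : i + 1 ≤ q^t := by
      have hiq : i ≠ q^t := by
        intro h; exact h3 (h ▸ dvd_pow_self q (by omega))
      omega
    rw [← hcard24]
    refine master_lemma q t n i 0 i hq3 ⟨kq, hkq⟩ ht hn2 (by ring) (by omega)
      (by omega) (by omega) (Or.inr (by omega)) ?_ h3 (by omega) ?_
    · -- hD4 : 2i + q^2 ≤ q^(t+1)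
      omega
    · -- hcard
      intro e he
      have het : e ≤ t - 1 := by omega
      have hqe : q^e ≤ q^(t-1) := Nat.pow_le_pow_right (by omega) het
      have hqB : q * q^(t-1) = q^t := by rw [← pow_succ']; congr 1; omega
      have g1 : 2*i*(q^e+1) ≤ (2*i)*(q^(t-1)+1) := Nat.mul_le_mul_left (2*i) (by omega)
      have g2 : (2*i)*(q^(t-1)+1) = 2*(i*q^(t-1)) + 2*i := by ring
      have g3 : i*q^(t-1) + 1*q^(t-1) ≤ q^t*q^(t-1) := by
        calc i*q^(t-1) + 1*q^(t-1) = (i+1)*q^(t-1) := by ring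
        _ ≤ q^t*q^(t-1) := Nat.mul_le_mul_right _ hup
      have g4 : 3*(q^t*q^(t-1)) ≤ q^t*q^t := by
        have h6 : 3*q^(t-1) ≤ q*q^(t-1) := Nat.mul_le_mul_right _ hq3
        calc 3*(q^t*q^(t-1)) = q^t*(3*q^(t-1)) := by ring
        _ ≤ q^t*(q*q^(t-1)) := Nat.mul_le_mul_left _ h6
        _ = q^t*q^t := by rw [hqB]
      have g5 : 2 ≤ q^(t-1) := by
        calc 2 ≤ q := by omega
        _ = q^1 := (pow_one q).symm
        _ ≤ q^(t-1) := Nat.pow_le_pow_right (by omega) (by omega)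
      have g6 : q^(2*t) = q^t*q^t := by rw [← pow_add]; congr 1; omega
      have g7 : q^t*2 ≤ q^t*q^(t-1) := Nat.mul_le_mul_left _ g5
      omega
  · -- Part 2
    intro hm8 i h1 h2 h3 hnotX
    have ht4 : 4 ≤ t := by omega
    set a := i / q^t with hadef
    set c := i % q^t with hcdef
    have hdm := Nat.div_add_mod i (q^t)
    have hi : i = a*q^t + c := by rw [← hdm]; ring
    have hc : c < q^t := Nat.mod_lt _ (by omega)
    have hD5 : ¬ q ∣ c := by
      intro hdvd
      refine h3 ?_
      rw [hi]
      exact Dvd.dvd.add (Dvd.dvd.mul_left (dvd_pow_self q (by omega)) a) hdvd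
    have hc1 : 1 ≤ c := by
      rcases Nat.eq_zero_or_pos c with h | h
      · exact absurd (h ▸ dvd_zero q) hD5
      · exact h
    -- upper bound 2i ≤ q^(t+1) - 1
    have hup2 : 2*i + 1 ≤ q^(t+1) := by
      have hd2 := Nat.div_add_mod (q^(t+1)-1) 2
      have : 1 ≤ q^(t+1) := Nat.one_le_pow _ _ (by omega)
      omega
    -- hD4 from not-X5
    have hile : i ≤ (q^(t+1) - q^2)/2 := by
      by_contra hco
      push_neg at hco
      exact hnotX (Or.inr (Or.inr (Or.inr (Or.inr ⟨by omega, h2, h3⟩))))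
    have hD4 : 2*i + q^2 ≤ q^(t+1) := by
      have hq12 : q^(t+1) = q^2 * q^(t-1) := by rw [← pow_add]; congr 1; omega
      obtain ⟨kt1, hkt1⟩ : Odd (q^(t-1)) := hodd.pow
      have h9 : q^(t+1) = 2*(q^2*kt1) + q^2 := by rw [hq12, hkt1]; ring
      omega
    -- 2a + 1 ≤ q
    have haqt : a*q^t ≤ i := by omega
    have h2a : 2*a + 1 ≤ q := by
      have h7 : (2*a)*q^t < q*q^t := by
        have : 2*(a*q^t) ≤ 2*i := by omega
        calc (2*a)*q^t = 2*(a*q^t) := by ring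
        _ < q*q^t := by rw [← hqt1']; omega
      have := Nat.lt_of_mul_lt_mul_right h7
      omega
    -- hD1
    have hD1 : a + 1 ≤ c := by
      by_contra hco
      push_neg at hco
      exact hnotX (Or.inl ⟨a, c, hc1, by omega, by omega, hi⟩)
    -- hD2
    have hD2 : c + a + 1 ≤ q^t := by
      by_contra hco
      push_neg at hco
      have hca : q^t ≤ c + a := by omega
      have ha1 : 1 ≤ a := by omega
      -- rule out 2a = q - 1
      have h2a3 : 2*a + 3 ≤ q := by
        rcases Nat.lt_or_ge (2*a + 1) q with h | h
        · omega
        · exfalso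
          have hqeq : q = 2*a + 1 := by omega
          have heq1 : q^(t+1) = 2*(a*q^t) + q^t := by
            rw [hqt1', hqeq]; ring
          omega
      refine hnotX (Or.inr (Or.inl ⟨a+1, q^t - c, by omega, by omega, by omega, ?_⟩))
      have hexp : (a+1)*q^t = a*q^t + q^t := by ring
      omega
    -- hD3
    have hD3 : 2*(c+a) + 1 ≤ q^t ∨ q^t + 2*a + 3 ≤ 2*c := by
      by_contra hco
      push_neg at hco
      obtain ⟨hco1, hco2⟩ := hco
      have hco1' : q^t ≤ 2*(c+a) := by omega
      have hco2' : 2*c ≤ q^t + 2*a + 2 := by omega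
      -- rule out 2a = q-1
      have h2a3 : 2*a + 3 ≤ q := by
        rcases Nat.lt_or_ge (2*a + 1) q with h | h
        · omega
        · exfalso
          have hqeq : q = 2*a + 1 := by omega
          have heq1 : q^(t+1) = 2*(a*q^t) + q^t := by
            rw [hqt1', hqeq]; ring
          omega
      rcases Nat.lt_or_ge (2*c) (q^t) with hcc | hcc
      · -- X3 second form
        refine hnotX (Or.inr (Or.inr (Or.inl ⟨a, (q^t+1)/2 - c, by omega, by omega, by omega,
          Or.inr ?_⟩)))
        omega
      · rcases Nat.lt_or_ge (2*c) (q^t + 2*a + 1) with hcc2 | hcc2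
        · -- X3 first form
          refine hnotX (Or.inr (Or.inr (Or.inl ⟨a, c - (q^t-1)/2, by omega, by omega, by omega,
            Or.inl ?_⟩)))
          omega
        · -- 2c = q^t + 2a + 1 : X4
          have : 2*c = q^t + 2*a + 1 := by omega
          refine hnotX (Or.inr (Or.inr (Or.inr (Or.inl ⟨a, by omega, ?_⟩))))
          have hexp : a*(q^t+1) = a*q^t + a := by ring
          omega
    rw [← hcard24]
    refine master_lemma q t n i a c hq3 ⟨kq, hkq⟩ ht hn2 hi hc hD1 hD2 hD3 hD4 hD5 h2a ?_
    intro e he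
    have het : e ≤ t - 2 := by omega
    have hqe : q^e ≤ q^(t-2) := Nat.pow_le_pow_right (by omega) het
    have g1 : 2*i*(q^e+1) ≤ q^(t+1)*(q^(t-2)+1) :=
      Nat.mul_le_mul (by omega) (by omega)
    have g2 : q^(t+1)*(q^(t-2)+1) = q^(2*t-1) + q^(t+1) := by
      rw [mul_add, mul_one, ← pow_add]
      congr 2
      omega
    have g3 : q^(t+1) ≤ q^(2*t-1) := Nat.pow_le_pow_right (by omega) (by omega)
    have g4 : 2*q^(2*t-1) ≤ q^(2*t) := by
      have h6 : q^(2*t) = q^(2*t-1)*q := by rw [← pow_succ]; congr 1; omega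
      have h7 : q^(2*t-1)*2 ≤ q^(2*t-1)*q := Nat.mul_le_mul_left _ (by omega)
      omega
    omega
end

section
/- Let m be an odd positive integer and n = (3^m+1)/4. For every integer a with 1 ≤ a < n, a is a coset leader of its 3-cyclotomic coset modulo (3^m+1)/4 if and only if 2a is a coset leader of its 3-cyclotomic coset modulo (3^m+1)/2. Moreover, the 3-cyclotomic coset of a modulo (3^m+1)/4 and the 3-cyclotomic coset of 2a modulo (3^m+1)/2 have the same number of elements. -/
lemma my_pow_eq_one_iff (N k : ℕ) :
    ((3 : ℕ) : ZMod N) ^ k = 1 ↔ (3 : ℕ) ^ k ≡ 1 [MOD N] := by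
  rw [← Nat.cast_pow,
    show (1 : ZMod N) = ((1 : ℕ) : ZMod N) by norm_cast, ZMod.natCast_eq_natCast_iff]

lemma order_double (n : ℕ) (hn : n % 2 = 1) :
    orderOf (((3:ℕ)) : ZMod (2 * n)) = orderOf (((3:ℕ)) : ZMod n) := by
  have hcop : Nat.Coprime 2 n := by
    exact Nat.coprime_two_left.mpr (Nat.odd_iff.mpr hn)
  have key : ∀ k, ((3:ℕ) : ZMod (2 * n)) ^ k = 1 ↔ ((3:ℕ) : ZMod n) ^ k = 1 := by
    intro k
    rw [my_pow_eq_one_iff, my_pow_eq_one_iff,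
      ← Nat.modEq_and_modEq_iff_modEq_mul hcop]
    have h2 : (3 : ℕ) ^ k ≡ 1 [MOD 2] := by
      have := (show (3 : ℕ) ≡ 1 [MOD 2] by decide).pow k
      simpa using this
    tauto
  apply dvd_antisymm
  · rw [orderOf_dvd_iff_pow_eq_one, key]
    exact pow_orderOf_eq_one _
  · rw [orderOf_dvd_iff_pow_eq_one, ← key]
    exact pow_orderOf_eq_one _

lemma coset_double (n a : ℕ) (hn : n % 2 = 1) :
    cycCoset 3 (2 * n) (2 * a) = (cycCoset 3 n a).image (fun x => 2 * x) := by
  unfold cycCoset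
  rw [order_double n hn, Finset.image_image]
  apply Finset.image_congr
  intro j _
  show 2 * a * 3 ^ j % (2 * n) = 2 * (a * 3 ^ j % n)
  rw [mul_assoc, Nat.mul_mod_mul_left]

/-- for odd `m`, `a` with `1 ≤ a < (3^m+1)/4` is a coset leader modulo
`(3^m+1)/4` iff `2a` is a coset leader modulo `(3^m+1)/2`; the two cosets have equal size. -/
theorem stmt_18 (m : ℕ) (hm : Odd m) (hpos : 0 < m)
    (n : ℕ) (hn : n = (3 ^ m + 1) / 4) :
    ∀ a : ℕ, 1 ≤ a → a < n →
      (IsCosetLeader 3 ((3 ^ m + 1) / 4) a ↔ IsCosetLeader 3 ((3 ^ m + 1) / 2) (2 * a)) ∧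
      (cycCoset 3 ((3 ^ m + 1) / 4) a).card = (cycCoset 3 ((3 ^ m + 1) / 2) (2 * a)).card := by
  -- 3^m ≡ 3 [MOD 8] since m is odd
  obtain ⟨k, hk⟩ := hm
  have h8 : (3 : ℕ) ^ m % 8 = 3 := by
    have h9 : (9 : ℕ) ^ k ≡ 1 ^ k [MOD 8] := (show (9 : ℕ) ≡ 1 [MOD 8] by decide).pow k
    have hpow : (3 : ℕ) ^ m = 9 ^ k * 3 := by
      subst hk; rw [pow_succ, pow_mul]; norm_num
    have := h9.mul_right 3
    simpa [hpow, Nat.ModEq] using this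
  have hM : (3 : ℕ) ^ m % 8 = 3 := h8
  have hhalf : (3 ^ m + 1) / 2 = 2 * n := by omega
  have hquart : (3 ^ m + 1) / 4 = n := by omega
  have hodd : n % 2 = 1 := by omega
  intro a ha1 ha2
  rw [hhalf, hquart]
  constructor
  · unfold IsCosetLeader
    rw [coset_double n a hodd]
    constructor
    · rintro ⟨hmem, hmin⟩
      refine ⟨Finset.mem_image_of_mem _ hmem, ?_⟩
      intro x hx
      obtain ⟨y, hy, rfl⟩ := Finset.mem_image.mp hx
      have h1 := hmin y hy
      show 2 * a ≤ 2 * y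
      omega
    · rintro ⟨hmem, hmin⟩
      obtain ⟨y, hy, hy2⟩ := Finset.mem_image.mp hmem
      have hy2' : 2 * y = 2 * a := hy2
      have hya : y = a := by omega
      rw [hya] at hy
      refine ⟨hy, ?_⟩
      intro x hx
      have h1 : 2 * a ≤ 2 * x := hmin (2 * x) (Finset.mem_image_of_mem _ hx)
      omega
  · rw [coset_double n a hodd,
      Finset.card_image_of_injective _
        (fun x y h => Nat.eq_of_mul_eq_mul_left two_pos h : Function.Injective (fun x => 2 * x))]
end
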